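/- arXiv:2108.11058 — 7 statements merged into one kernel-verified Lean document; each statement's English description precedes it below -/
import Mathlib

section
/- Let f : ℝ → ℝ be a C¹ map and n a positive integer. Define F_{2n} : ℝ → ℝ by F_{2n}(x) = (f^{2n}(x) − x)/(f^n(x) − x) at points where f^n(x) ≠ x, and F_{2n}(x) = (f^n)′(x) + 1 at points where f^n(x) = x. Then F_{2n} is continuous on ℝ. -/
/-!
Writing `g = f^[n]`, we have `F x = dslope g x (g x) + 1` everywhere: off the fixed points of `g`
the difference quotient `(g (g x) - x) / (g x - x)` is `1 +` the slope of `g` between `x` and `g x`,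
and at a fixed point `dslope g x x = g' x`. So it suffices that `(x, y) ↦ dslope g x y` is jointly
continuous for `C¹` functions `g`, which follows from the mean value theorem: `dslope g x y = g' c`
for some `c` between `x` and `y`, and `g'` is continuous.
-/

open Filter Function Set Topology

theorem ContDiff.iterate {𝕜 E : Type*} [NontriviallyNormedField 𝕜] [NormedAddCommGroup E]
    [NormedSpace 𝕜 E] {n : WithTop ℕ∞} {f : E → E} (hf : ContDiff 𝕜 n f) :
    ∀ m : ℕ, ContDiff 𝕜 n f^[m]
  | 0 => contDiff_id
  | m + 1 => by
    rw [iterate_succ']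
    exact hf.comp (hf.iterate m)

theorem exists_mem_uIcc_dslope_eq_deriv {f : ℝ → ℝ} (hf : Differentiable ℝ f) (a b : ℝ) :
    ∃ c ∈ uIcc a b, dslope f a b = deriv f c := by
  rcases lt_trichotomy a b with hab | rfl | hba
  · obtain ⟨c, hc, hslope⟩ := exists_deriv_eq_slope' f hab hf.continuous.continuousOn
      fun x _ => hf.differentiableAt.differentiableWithinAt
    exact ⟨c, Ioo_subset_Icc_self.trans Icc_subset_uIcc hc, by rw [dslope_of_ne f hab.ne', hslope]⟩
  · exact ⟨a, by simp, dslope_same f a⟩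
  · obtain ⟨c, hc, hslope⟩ := exists_deriv_eq_slope' f hba hf.continuous.continuousOn
      fun x _ => hf.differentiableAt.differentiableWithinAt
    exact ⟨c, Ioo_subset_Icc_self.trans Icc_subset_uIcc' hc,
      by rw [dslope_of_ne f hba.ne, slope_comm, hslope]⟩

theorem tendsto_uncurry_dslope_diag {f : ℝ → ℝ} (hf : Differentiable ℝ f) {a : ℝ}
    (hf' : ContinuousAt (deriv f) a) :
    Tendsto (uncurry (dslope f)) (𝓝 (a, a)) (𝓝 (deriv f a)) := by
  choose c hc hdslope using fun p : ℝ × ℝ => exists_mem_uIcc_dslope_eq_deriv hf p.1 p.2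
  have hmin : Tendsto (fun p : ℝ × ℝ => min p.1 p.2) (𝓝 (a, a)) (𝓝 a) := by
    simpa using (continuous_fst.min continuous_snd).tendsto (a, a)
  have hmax : Tendsto (fun p : ℝ × ℝ => max p.1 p.2) (𝓝 (a, a)) (𝓝 a) := by
    simpa using (continuous_fst.max continuous_snd).tendsto (a, a)
  have hc_tendsto : Tendsto c (𝓝 (a, a)) (𝓝 a) :=
    tendsto_of_tendsto_of_tendsto_of_le_of_le hmin hmax (fun p => (hc p).1) fun p => (hc p).2
  exact (hf'.tendsto.comp hc_tendsto).congr fun p => (hdslope p).symm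

theorem continuousAt_uncurry_dslope_of_ne {f : ℝ → ℝ} (hf : Continuous f) {a b : ℝ} (hab : a ≠ b) :
    ContinuousAt (uncurry (dslope f)) (a, b) := by
  have hne : ∀ᶠ p : ℝ × ℝ in 𝓝 (a, b), p.2 ≠ p.1 :=
    (isOpen_ne_fun continuous_snd continuous_fst).mem_nhds hab.symm
  refine ContinuousAt.congr ?_ (hne.mono fun p hp => (dslope_of_ne f hp).symm)
  simp only [slope_def_field]
  exact ((hf.comp continuous_snd).sub (hf.comp continuous_fst)).continuousAt.div
    (continuous_snd.sub continuous_fst).continuousAt (sub_ne_zero.mpr hab.symm)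

theorem ContDiff.continuous_uncurry_dslope {f : ℝ → ℝ} (hf : ContDiff ℝ 1 f) :
    Continuous (uncurry (dslope f)) := by
  refine continuous_iff_continuousAt.mpr fun ⟨a, b⟩ => ?_
  rcases eq_or_ne a b with rfl | hab
  · simpa [ContinuousAt, dslope_same] using
      tendsto_uncurry_dslope_diag (hf.differentiable one_ne_zero)
        (hf.continuous_deriv le_rfl).continuousAt
  · exact continuousAt_uncurry_dslope_of_ne hf.continuous hab

theorem stmt0_general (f : ℝ → ℝ) (hf : ContDiff ℝ 1 f) (n : ℕ)
    (F : ℝ → ℝ)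
    (hF₁ : ∀ x : ℝ, f^[n] x ≠ x → F x = (f^[2 * n] x - x) / (f^[n] x - x))
    (hF₂ : ∀ x : ℝ, f^[n] x = x → F x = deriv (f^[n]) x + 1) :
    Continuous F := by
  set g := f^[n]
  have hF : F = fun x => dslope g x (g x) + 1 := by
    funext x
    by_cases hx : g x = x
    · rw [hF₂ x hx, hx, dslope_same]
    · have hx' : g x - x ≠ 0 := sub_ne_zero.mpr hx
      rw [hF₁ x hx, dslope_of_ne g hx, slope_def_field, two_mul, iterate_add_apply]
      field_simp
      ring
  have hg : ContDiff ℝ 1 g := hf.iterate n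
  rw [hF]
  exact (hg.continuous_uncurry_dslope.comp (continuous_id.prodMk hg.continuous)).add
    continuous_const

/-- Let `f : ℝ → ℝ` be a `C¹` map and `n` a positive integer.
Define `F : ℝ → ℝ` by `F x = (f^[2n] x - x) / (f^[n] x - x)` where `f^[n] x ≠ x`,
and `F x = deriv (f^[n]) x + 1` where `f^[n] x = x`.  Then `F` is continuous on `ℝ`. -/
theorem stmt0 (f : ℝ → ℝ) (hf : ContDiff ℝ 1 f) (n : ℕ) (hn : 0 < n)
    (F : ℝ → ℝ)
    (hF₁ : ∀ x : ℝ, f^[n] x ≠ x → F x = (f^[2 * n] x - x) / (f^[n] x - x))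
    (hF₂ : ∀ x : ℝ, f^[n] x = x → F x = deriv (f^[n]) x + 1) :
    Continuous F :=
  stmt0_general f hf n F hF₁ hF₂
end

section
/- Let {f_t}_{t∈[0,1]} be a continuous full family of C¹ unimodal maps. Then for every positive integer m, the quotient map G_m : [0,1] × ℝ → ℝ is continuous. -/
/-- A `C¹` unimodal map: `f' > 0` on `(-∞,0)`, `f' < 0` on `(0,∞)`, `f' 0 = 0`. -/
def Unimodal (f : ℝ → ℝ) : Prop :=
  ContDiff ℝ 1 f ∧ (∀ x < (0 : ℝ), 0 < deriv f x) ∧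
    (∀ x > (0 : ℝ), deriv f x < 0) ∧ deriv f 0 = 0

/-- A `C¹` unimodal map is a horseshoe: it has exactly two fixed points, the left
one being `a`, and there are `a < a₁ < b₁ < b` with `f b = a`, `f a₁ = f b₁ = b`
and `|f'| > 1` on `[a,a₁] ∪ [b₁,b]`. -/
def Horseshoe (f : ℝ → ℝ) : Prop :=
  Unimodal f ∧ ∃ a c : ℝ, a < c ∧ {x : ℝ | f x = x} = {a, c} ∧
    ∃ a₁ b₁ b : ℝ, a < a₁ ∧ a₁ < b₁ ∧ b₁ < b ∧ f b = a ∧ f a₁ = b ∧ f b₁ = b ∧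
      ∀ x ∈ Set.Icc a a₁ ∪ Set.Icc b₁ b, 1 < |deriv f x|

/-- A continuous full family of `C¹` unimodal maps `f t`, `t ∈ [0,1]`:
`(t,x) ↦ f t x` and `(t,x) ↦ (f t)' x` are continuous on `[0,1] × ℝ`, each `f t`
is unimodal, `f 0` has no fixed point, `f 1` is a horseshoe, and there is `M > 0`
such that all fixed points of every `f t` lie in `[-M, M]`. -/
def ContFullFamily (f : ℝ → ℝ → ℝ) : Prop :=
  (∀ t ∈ Set.Icc (0 : ℝ) 1, Unimodal (f t)) ∧
  ContinuousOn (fun p : ℝ × ℝ => f p.1 p.2) (Set.Icc (0 : ℝ) 1 ×ˢ Set.univ) ∧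
  ContinuousOn (fun p : ℝ × ℝ => deriv (f p.1) p.2) (Set.Icc (0 : ℝ) 1 ×ˢ Set.univ) ∧
  (∀ x : ℝ, f 0 x ≠ x) ∧
  Horseshoe (f 1) ∧
  (∃ M > (0 : ℝ), ∀ t ∈ Set.Icc (0 : ℝ) 1, ∀ x : ℝ, f t x = x → x ∈ Set.Icc (-M) M)

open scoped Classical in
/-- The quotient map `G_m` of the family: for odd `m`, `G_m (t,x) = f_t^m x - x`;
for even `m = 2n`, it is `(f_t^{2n} x - x)/(f_t^n x - x)` off the fixed-point set
of `f_t^n`, and `(f_t^n)' x + 1` on it. -/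
noncomputable def Gmap (f : ℝ → ℝ → ℝ) (m : ℕ) (t x : ℝ) : ℝ :=
  if Odd m then (f t)^[m] x - x
  else if (f t)^[m / 2] x = x then deriv ((f t)^[m / 2]) x + 1
  else ((f t)^[m] x - x) / ((f t)^[m / 2] x - x)

/-- The zero set `G_m⁻¹(0) ⊆ [0,1] × ℝ`. -/
def Zset (f : ℝ → ℝ → ℝ) (m : ℕ) : Set (ℝ × ℝ) :=
  {p : ℝ × ℝ | p.1 ∈ Set.Icc (0 : ℝ) 1 ∧ Gmap f m p.1 p.2 = 0}

/-- `V` is a periodic point component of period-`m` data: a connected component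
of `G_m⁻¹(0)`. -/
def IsPPComponent (f : ℝ → ℝ → ℝ) (m : ℕ) (V : Set (ℝ × ℝ)) : Prop :=
  ∃ p ∈ Zset f m, V = connectedComponentIn (Zset f m) p

/-- The period of a periodic point component `V` is `n`: the maximum of the
minimal periods of its points is `n`. -/
def CompPeriod (f : ℝ → ℝ → ℝ) (V : Set (ℝ × ℝ)) (n : ℕ) : Prop :=
  (∀ p ∈ V, Function.minimalPeriod (f p.1) p.2 ≤ n) ∧
  (∃ p ∈ V, Function.minimalPeriod (f p.1) p.2 = n)


/-!
For odd `m`, `G_m (t, x) = f_t^m x - x` is plainly continuous. For even `m = 2n`, with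
`g_t = f_t^n`, one has `G_m (t, x) = dslope g_t x (g_t x) + 1`: the divided difference of `g_t`
between `x` and `g_t x`, which is `g_t' x` on the diagonal. The removable singularity disappears
in the integral form `dslope g a b = ∫₀¹ g'(a + τ (b - a)) dτ`, which is jointly continuous in
`(t, a, b)` because `(t, x) ↦ g_t' x` is, by the chain rule.
-/

open Set

section JointRegularity

variable {X : Type*} [TopologicalSpace X] {s : Set X} {F : X → ℝ → ℝ}

theorem continuousOn_iterate_uncurry
    (hF : ContinuousOn (fun q : X × ℝ => F q.1 q.2) (s ×ˢ univ)) (k : ℕ) :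
    ContinuousOn (fun q : X × ℝ => (F q.1)^[k] q.2) (s ×ˢ univ) := by
  induction k with
  | zero => exact continuousOn_snd
  | succ k ih =>
    simp only [Function.iterate_succ_apply']
    exact hF.comp (continuousOn_fst.prodMk ih) fun q hq => ⟨hq.1, trivial⟩

theorem continuousOn_deriv_iterate_uncurry (hd : ∀ p ∈ s, Differentiable ℝ (F p))
    (hF : ContinuousOn (fun q : X × ℝ => F q.1 q.2) (s ×ˢ univ))
    (hF' : ContinuousOn (fun q : X × ℝ => deriv (F q.1) q.2) (s ×ˢ univ)) (k : ℕ) :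
    ContinuousOn (fun q : X × ℝ => deriv ((F q.1)^[k]) q.2) (s ×ˢ univ) := by
  induction k with
  | zero => simpa only [Function.iterate_zero, deriv_id] using continuousOn_const
  | succ k ih =>
    have hchain : ∀ q ∈ s ×ˢ (univ : Set ℝ), deriv ((F q.1)^[k + 1]) q.2 =
        deriv (F q.1) ((F q.1)^[k] q.2) * deriv ((F q.1)^[k]) q.2 := fun q hq => by
      rw [Function.iterate_succ']
      exact deriv_comp _ (hd q.1 hq.1 _) ((hd q.1 hq.1).iterate k _)
    refine ContinuousOn.congr (.mul ?_ ih) hchain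
    exact hF'.comp (continuousOn_fst.prodMk (continuousOn_iterate_uncurry hF k))
      fun q hq => ⟨hq.1, trivial⟩

theorem dslope_eq_intervalIntegral {f : ℝ → ℝ} (hd : Differentiable ℝ f)
    (hf' : Continuous (deriv f)) (a b : ℝ) :
    dslope f a b = ∫ τ in (0 : ℝ)..1, deriv f (a + τ * (b - a)) := by
  rcases eq_or_ne b a with rfl | hba
  · simp [dslope_same]
  · have hftc := intervalIntegral.integral_unitInterval_deriv_eq_sub
      (f := f) (z₀ := a) (z₁ := b - a) (hf'.comp (by fun_prop)).continuousOn
      fun _ _ => (hd _).hasDerivAt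
    simp only [smul_eq_mul, add_sub_cancel] at hftc
    rw [dslope_of_ne _ hba, slope_def_field, ← hftc, mul_div_cancel_left₀ _ (sub_ne_zero.2 hba)]

theorem ContinuousOn.dslope_uncurry {u v : X → ℝ} (hd : ∀ p ∈ s, Differentiable ℝ (F p))
    (hF' : ContinuousOn (fun q : X × ℝ => deriv (F q.1) q.2) (s ×ˢ univ))
    (hu : ContinuousOn u s) (hv : ContinuousOn v s) :
    ContinuousOn (fun p => dslope (F p) (u p) (v p)) s := by
  have hF'_slice : ∀ p ∈ s, Continuous (deriv (F p)) := fun p hp =>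
    hF'.comp_continuous (f := fun y => (p, y)) (by fun_prop) fun _ => ⟨hp, trivial⟩
  refine ContinuousOn.congr ?_ fun p hp =>
    dslope_eq_intervalIntegral (hd p hp) (hF'_slice p hp) _ _
  rw [continuousOn_iff_continuous_domRestrict] at hu hv ⊢
  refine intervalIntegral.continuous_parametric_intervalIntegral_of_continuous' ?_ 0 1
  refine hF'.comp_continuous
    (f := fun q : s × ℝ =>
      ((q.1 : X), s.domRestrict u q.1 + q.2 * (s.domRestrict v q.1 - s.domRestrict u q.1)))
    (by fun_prop) fun q => ⟨q.1.2, trivial⟩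

end JointRegularity

theorem Gmap_two_mul (f : ℝ → ℝ → ℝ) (n : ℕ) (t x : ℝ) :
    Gmap f (2 * n) t x = dslope ((f t)^[n]) x ((f t)^[n] x) + 1 := by
  have hdiv : 2 * n / 2 = n := by omega
  simp only [Gmap, Nat.not_odd_iff_even.2 (even_two_mul n), if_false, hdiv]
  split_ifs with hfix
  · rw [hfix, dslope_same]
  · rw [dslope_of_ne _ hfix, slope_def_field, two_mul, Function.iterate_add_apply]
    have hne : (f t)^[n] x - x ≠ 0 := sub_ne_zero.2 hfix
    field_simp
    ring

theorem stmt1_general (f : ℝ → ℝ → ℝ) (hf : ContFullFamily f) (m : ℕ) :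
    ContinuousOn (fun p : ℝ × ℝ => Gmap f m p.1 p.2)
      (Set.Icc (0 : ℝ) 1 ×ˢ Set.univ) := by
  obtain ⟨hunimodal, hcont, hcont', -⟩ := hf
  have hd : ∀ t ∈ Icc (0 : ℝ) 1, Differentiable ℝ (f t) :=
    fun t ht => (hunimodal t ht).1.differentiable one_ne_zero
  rcases Nat.even_or_odd' m with ⟨n, rfl | rfl⟩
  · simp only [Gmap_two_mul]
    refine ContinuousOn.add ?_ continuousOn_const
    have hF' : ContinuousOn (fun q : (ℝ × ℝ) × ℝ => deriv ((f q.1.1)^[n]) q.2)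
        ((Icc 0 1 ×ˢ univ) ×ˢ univ) :=
      (continuousOn_deriv_iterate_uncurry hd hcont hcont' n).comp
        (f := fun q : (ℝ × ℝ) × ℝ => (q.1.1, q.2)) (by fun_prop) fun q hq => ⟨hq.1.1, trivial⟩
    exact .dslope_uncurry (fun p hp => (hd p.1 hp.1).iterate n) hF' continuousOn_snd
      (continuousOn_iterate_uncurry hcont n)
  · simp only [Gmap, odd_two_mul_add_one n, if_true]
    exact (continuousOn_iterate_uncurry hcont _).sub continuousOn_snd

/-- For a continuous full family of `C¹` unimodal maps, the quotient
map `G_m` is continuous on `[0,1] × ℝ` for every positive integer `m`. -/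
theorem stmt1 (f : ℝ → ℝ → ℝ) (hf : ContFullFamily f) (m : ℕ) (hm : 0 < m) :
    ContinuousOn (fun p : ℝ × ℝ => Gmap f m p.1 p.2)
      (Set.Icc (0 : ℝ) 1 ×ˢ Set.univ) :=
  stmt1_general f hf m
end

section
/- Let {f_t}_{t∈[0,1]} be a continuous full family of C¹ unimodal maps, let V be a periodic point component of G_{2n}^{−1}(0) of period 2n, and let V_n = {(t,x) ∈ V : f_t^n(x) = x}. Then (1) (f_t^n)′(x) = −1 for every (t,x) ∈ V_n, and (2) for every t ∈ [0,1], the slice V_n ∩ ({t} × ℝ) is a finite set. -/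
/-!
On `V_n` the quotient map `G_{2n}` is given by its second branch `(f_t^n)' + 1`, so
`(f_t^n)' = -1` there. For the slice at `t`, the points of `V_n` are fixed points of
`g = f_t^n` with `g' = -1`, a closed condition. Since the slope of `g` between two fixed points
is `1`, no such point is an accumulation point of fixed points, so the slice is discrete.
It is also bounded, because periodic points of a unimodal map whose fixed points are bounded
below lie in `[min (f (f 0)) (f (-M)), f 0]`; hence it is finite.
-/
open Set Filter Topology Function

theorem ContDiff.iterate_s2 {f : ℝ → ℝ} (hf : ContDiff ℝ 1 f) : ∀ n : ℕ, ContDiff ℝ 1 f^[n]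
  | 0 => contDiff_id
  | n + 1 => by
      rw [iterate_succ']
      exact hf.comp (hf.iterate_s2 n)

namespace Unimodal

variable {f : ℝ → ℝ}

theorem continuous (hf : Unimodal f) : Continuous f := hf.1.continuous

theorem monotoneOn_Iic (hf : Unimodal f) : MonotoneOn f (Iic 0) :=
  (strictMonoOn_of_deriv_pos (convex_Iic 0) hf.continuous.continuousOn fun x hx =>
    hf.2.1 x (by rwa [interior_Iic] at hx)).monotoneOn

theorem antitoneOn_Ici (hf : Unimodal f) : AntitoneOn f (Ici 0) :=
  (strictAntiOn_of_deriv_neg (convex_Ici 0) hf.continuous.continuousOn fun x hx =>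
    hf.2.2.1 x (by rwa [interior_Ici] at hx)).antitoneOn

end Unimodal

theorem le_apply_zero_of_monotoneOn_of_antitoneOn {f : ℝ → ℝ} (hmono : MonotoneOn f (Iic 0))
    (hanti : AntitoneOn f (Ici 0)) (y : ℝ) : f y ≤ f 0 := by
  rcases le_total y 0 with hy | hy
  · exact hmono hy self_mem_Iic hy
  · exact hanti self_mem_Ici hy hy

/-- The minimum `f z` of an invariant set lies above `f (f 0)` when `0 ≤ z ≤ f 0`, above
`f (-M)` when `-M ≤ z ≤ 0`, and `z < -M` is impossible: then `f z ≤ z` and `f (f z) ≥ f z`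
would give a fixed point in `[f z, z]`. -/
theorem subset_Icc_of_mapsTo_of_surjOn {f : ℝ → ℝ} (hc : Continuous f)
    (hmono : MonotoneOn f (Iic 0)) (hanti : AntitoneOn f (Ici 0)) {M : ℝ} (hfix : ∀ x, f x = x → -M ≤ x) {O : Set ℝ}
    (hO : O.Finite) (hmaps : MapsTo f O O) (hsurj : SurjOn f O O) :
    O ⊆ Icc (min (f (f 0)) (f (-M))) (f 0) := by
  have hmax := le_apply_zero_of_monotoneOn_of_antitoneOn hmono hanti
  intro x hx
  refine ⟨?_, by obtain ⟨w, -, rfl⟩ := hsurj hx; exact hmax w⟩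
  obtain ⟨m, hmO, hmin⟩ := exists_min_image O id hO ⟨x, hx⟩
  obtain ⟨z, hzO, rfl⟩ := hsurj hmO
  suffices min (f (f 0)) (f (-M)) ≤ f z from this.trans (hmin x hx)
  have hz_le : z ≤ f 0 := by obtain ⟨w, -, rfl⟩ := hsurj hzO; exact hmax w
  rcases le_total 0 z with hz | hz
  · exact (min_le_left _ _).trans (hanti hz (hz.trans hz_le) hz_le)
  rcases le_or_gt (-M) z with hMz | hzM
  · exact (min_le_right _ _).trans (hmono (hMz.trans hz) hz hMz)
  exfalso
  have hfz : f z ≤ z := hmin z hzO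
  have hffz : f z ≤ f (f z) := hmin _ (hmaps hmO)
  obtain ⟨c, hc_mem, hc_fix⟩ : ∃ c ∈ Icc (f z) z, f c - c = 0 :=
    intermediate_value_Icc' (f := fun w => f w - w) hfz (hc.sub continuous_id).continuousOn
      ⟨by linarith, by linarith⟩
  linarith [hfix c (by linarith), hc_mem.2]

namespace Function.IsPeriodicPt

variable {α : Type*} {f : α → α} {n : ℕ} {x : α}

theorem finite_range_iterate (h : IsPeriodicPt f n x) (hn : 0 < n) :
    (range fun k => f^[k] x).Finite :=
  ((finite_Iio n).image fun k => f^[k] x).subset <| range_subset_iff.2 fun k =>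
    ⟨k % n, Nat.mod_lt k hn, h.iterate_mod_apply k⟩

theorem surjOn_range_iterate (h : IsPeriodicPt f n x) (hn : 0 < n) :
    SurjOn f (range fun k => f^[k] x) (range fun k => f^[k] x) := by
  rintro _ ⟨k, rfl⟩
  refine ⟨f^[k + n - 1] x, ⟨_, rfl⟩, ?_⟩
  rw [← iterate_succ_apply' f, show (k + n - 1).succ = k + n by omega, iterate_add_apply, h.eq]

end Function.IsPeriodicPt

theorem mapsTo_range_iterate {α : Type*} (f : α → α) (x : α) :
    MapsTo f (range fun k => f^[k] x) (range fun k => f^[k] x) := by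
  rintro _ ⟨k, rfl⟩
  exact ⟨k + 1, iterate_succ_apply' f k x⟩

theorem Unimodal.mem_Icc_of_isPeriodicPt {f : ℝ → ℝ} (hf : Unimodal f) {M : ℝ}
    (hfix : ∀ x, f x = x → -M ≤ x) {n : ℕ} (hn : 0 < n) {x : ℝ} (hx : IsPeriodicPt f n x) :
    x ∈ Icc (min (f (f 0)) (f (-M))) (f 0) :=
  subset_Icc_of_mapsTo_of_surjOn hf.continuous hf.monotoneOn_Iic hf.antitoneOn_Ici hfix
    (hx.finite_range_iterate hn) (mapsTo_range_iterate f x) (hx.surjOn_range_iterate hn) ⟨0, rfl⟩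

/-- Slopes of `g` between two fixed points are `1`. -/
theorem HasDerivAt.eq_one_of_accPt_fixedPoints {g : ℝ → ℝ} {g' x₀ : ℝ} (hg : HasDerivAt g g' x₀)
    (hx₀ : IsFixedPt g x₀) (hacc : AccPt x₀ (𝓟 (fixedPoints g))) : g' = 1 := by
  refine tendsto_nhds_unique_of_frequently_eq (hasDerivAt_iff_tendsto_slope.1 hg)
    tendsto_const_nhds ?_
  refine (accPt_iff_frequently_nhdsNE.1 hacc).and_eventually self_mem_nhdsWithin |>.mono ?_
  rintro x ⟨hx : IsFixedPt g x, hne : x ≠ x₀⟩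
  rw [slope_def_field, hx.eq, hx₀.eq]
  exact div_self (sub_ne_zero.2 hne)

theorem finite_of_isBounded_of_forall_isFixedPt_deriv_eq {g : ℝ → ℝ} (hg : ContDiff ℝ 1 g)
    {c : ℝ} (hc : c ≠ 1) {S : Set ℝ} (hS : Bornology.IsBounded S)
    (hfix : ∀ x ∈ S, IsFixedPt g x ∧ deriv g x = c) : S.Finite := by
  by_contra hinf
  obtain ⟨x₀, hx₀, hacc⟩ :=
    Set.Infinite.exists_accPt_of_subset_isCompact hinf hS.isCompact_closure subset_closure
  have hclosed : IsClosed {x | IsFixedPt g x ∧ deriv g x = c} :=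
    (isClosed_fixedPoints hg.continuous).inter
      (isClosed_eq (hg.continuous_deriv le_rfl) continuous_const)
  have hx₀fix := closure_minimal hfix hclosed hx₀
  refine hc ?_
  rw [← hx₀fix.2]
  exact ((hg.differentiable one_ne_zero) x₀).hasDerivAt.eq_one_of_accPt_fixedPoints hx₀fix.1
    (hacc.mono (principal_mono.2 fun x hx => (hfix x hx).1))

theorem deriv_iterate_eq_neg_one_of_mem_Zset {f : ℝ → ℝ → ℝ} {n : ℕ} {p : ℝ × ℝ}
    (hp : p ∈ Zset f (2 * n)) (hfix : (f p.1)^[n] p.2 = p.2) :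
    deriv ((f p.1)^[n]) p.2 = -1 := by
  have hG := hp.2
  simp only [Gmap, Nat.not_odd_iff_even.2 (even_two_mul n), if_false,
    Nat.mul_div_cancel_left n two_pos, if_pos hfix] at hG
  linarith

theorem stmt2_general (f : ℝ → ℝ → ℝ) (hf : ContFullFamily f) (n : ℕ) (hn : 0 < n)
    (V : Set (ℝ × ℝ)) (hV : IsPPComponent f (2 * n) V) :
    (∀ p ∈ V, (f p.1)^[n] p.2 = p.2 → deriv ((f p.1)^[n]) p.2 = -1) ∧
    (∀ t : ℝ, {x : ℝ | (t, x) ∈ V ∧ (f t)^[n] x = x}.Finite) := by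
  obtain ⟨q, -, hVq⟩ := hV
  have hVZ : V ⊆ Zset f (2 * n) := hVq ▸ connectedComponentIn_subset _ _
  have hderiv : ∀ p ∈ V, (f p.1)^[n] p.2 = p.2 → deriv ((f p.1)^[n]) p.2 = -1 :=
    fun p hp => deriv_iterate_eq_neg_one_of_mem_Zset (hVZ hp)
  refine ⟨hderiv, fun t => ?_⟩
  by_cases ht : t ∈ Icc (0 : ℝ) 1
  swap
  · exact Set.finite_empty.subset fun x hx => ht (hVZ hx.1).1
  obtain ⟨hunimodal, -, -, -, -, M, -, hfixM⟩ := hf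
  have hft := hunimodal t ht
  refine finite_of_isBounded_of_forall_isFixedPt_deriv_eq (hft.1.iterate_s2 n) (by norm_num)
    (Metric.isBounded_Icc _ _ |>.subset fun x hx =>
      hft.mem_Icc_of_isPeriodicPt (fun y hy => (hfixM t ht y hy).1) hn hx.2)
    fun x hx => ⟨hx.2, hderiv (t, x) hx.1 hx.2⟩

/-- Let `V` be a periodic point component of `G_{2n}⁻¹(0)` of period
`2n` and `V_n = {(t,x) ∈ V | f_t^n x = x}`.  Then `(f_t^n)' x = -1` on `V_n`, and
each slice `V_n ∩ ({t} × ℝ)` is finite. -/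
theorem stmt2 (f : ℝ → ℝ → ℝ) (hf : ContFullFamily f) (n : ℕ) (hn : 0 < n)
    (V : Set (ℝ × ℝ)) (hV : IsPPComponent f (2 * n) V)
    (hVper : CompPeriod f V (2 * n)) :
    (∀ p ∈ V, (f p.1)^[n] p.2 = p.2 → deriv ((f p.1)^[n]) p.2 = -1) ∧
    (∀ t : ℝ, {x : ℝ | (t, x) ∈ V ∧ (f t)^[n] x = x}.Finite) :=
  stmt2_general f hf n hn V hV
end

section
/- Let A be a maximal periodic admissible sequence of minimal period n. Then the sequence Ã of period n obtained from A by flipping the symbol at every position congruent to n−1 modulo n (i.e., whose first n symbols are A_0 ⋯ A_{n−2} followed by the flip of A_{n−1}) is also a maximal sequence. -/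
/-!
Write `Ã` for the flipped sequence and fix `0 < k < n`. As `A` has minimal period `n`,
`S^k A < A`; let `m` be the first index where they differ. If `m + k < n - 1`, both sides are
flipped only after `m`, so `S^k Ã < Ã` for the same reason. If `m + k ≥ n`, maximality at the
shift `n - k` forces the block `A_0 ⋯ A_{n-k-1}` to be odd, and then `S^k Ã < Ã` already at
position `n - k - 1`, where `S^k Ã` carries a flipped symbol. If `m + k = n - 1`, the flip
repairs the disagreement at `m`, after which `S^k Ã` compares with `Ã` as `A` with `S^(m+1) A`
up to the next flipped position. Either they differ before it, and the parity inherited from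
`S^(m+1) A < A` gives `S^k Ã < Ã`, or `S^k Ã` agrees with `Ã` on a period except at one
place, which is impossible because both contain the same number of `R`s per period; hence
`S^k Ã = Ã`.
-/

/-- Admissible sequences are functions `ℕ → Bool`, with `false = L`, `true = R`.
`shiftSeq k A` is the `k`-fold shift `S^k A`. -/
def shiftSeq (k : ℕ) (A : ℕ → Bool) : ℕ → Bool := fun i => A (i + k)

/-- The block `A_0 ⋯ A_{n-1}` is even: it contains an even number of `R`'s. -/
def BlockEven (A : ℕ → Bool) (n : ℕ) : Prop :=
  Even ((Finset.range n).filter fun i => A i = true).card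

/-- The order on admissible sequences: `A < B` iff at the first index `n` of
disagreement, either `A_0 ⋯ A_{n-1}` is even and `A n = L < R = B n`, or it is
odd and `A n = R > L = B n`. -/
def SeqLT (A B : ℕ → Bool) : Prop :=
  ∃ n : ℕ, (∀ i < n, A i = B i) ∧ A n ≠ B n ∧
    ((BlockEven A n ∧ A n = false ∧ B n = true) ∨
     (¬ BlockEven A n ∧ A n = true ∧ B n = false))

def SeqLE (A B : ℕ → Bool) : Prop := SeqLT A B ∨ A = B

/-- `A` is maximal: `S^k A ≤ A` for all `k ≥ 0`. -/
def SeqMaximal (A : ℕ → Bool) : Prop := ∀ k : ℕ, SeqLE (shiftSeq k A) A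

/-- `A` is periodic of period `n > 0`. -/
def IsPeriodicSeq (A : ℕ → Bool) (n : ℕ) : Prop := 0 < n ∧ ∀ i, A (i + n) = A i

/-- The minimal period of `A` (and `0` if `A` is not periodic). -/
noncomputable def minPer (A : ℕ → Bool) : ℕ := sInf {n : ℕ | IsPeriodicSeq A n}

/-- Flip (`L ↔ R`) the symbol of `A` at every position congruent to `n - 1`
modulo `n`. -/
def flipAt (n : ℕ) (A : ℕ → Bool) : ℕ → Bool :=
  fun i => if i % n = n - 1 then !(A i) else A i

/-- The map `μ` on periodic admissible sequences: if `n` is the minimal period of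
`A` and `m` (with `0 ≤ m ≤ n-1`) is the unique integer such that `S^m A` is
maximal, then `μ A = S^{n-m} B`, where `B` is obtained from `S^m A` by flipping
the symbol at every position congruent to `n - 1` modulo `n`. -/
noncomputable def muSeq (A : ℕ → Bool) : ℕ → Bool :=
  shiftSeq (minPer A - sInf {m : ℕ | SeqMaximal (shiftSeq m A)})
    (flipAt (minPer A)
      (shiftSeq (sInf {m : ℕ | SeqMaximal (shiftSeq m A)}) A))

/-- The map `ν`: `ν A = μ A` if `per (μ A) = per A`, and `ν A = S^{per A / 2} A`
otherwise. -/
noncomputable def nuSeq (A : ℕ → Bool) : ℕ → Bool :=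
  if minPer (muSeq A) = minPer A then muSeq A else shiftSeq (minPer A / 2) A

def countR (X : ℕ → Bool) (c : ℕ) : ℕ := Nat.count (fun i => X i = true) c

def FirstDiff (X Y : ℕ → Bool) (d : ℕ) : Prop := (∀ i < d, X i = Y i) ∧ X d ≠ Y d

section Counting

variable {X Y : ℕ → Bool}

theorem countR_succ (X : ℕ → Bool) (c : ℕ) : countR X (c + 1) = countR X c + (X c).toNat := by
  cases h : X c <;> simp [countR, Nat.count_succ, h]

theorem countR_add (X : ℕ → Bool) (a b : ℕ) :
    countR X (a + b) = countR X a + countR (shiftSeq a X) b := by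
  rw [countR, Nat.count_add]
  simp only [add_comm a]
  rfl

theorem countR_congr {c : ℕ} (h : ∀ i < c, X i = Y i) : countR X c = countR Y c := by
  induction c with
  | zero => rfl
  | succ c ih =>
    rw [countR_succ, countR_succ, ih fun i hi => h i (by omega), h c (by omega)]

theorem blockEven_iff_even_countR (X : ℕ → Bool) (c : ℕ) :
    BlockEven X c ↔ Even (countR X c) := by
  rw [BlockEven, countR, Nat.count_eq_card_filter_range]

theorem countR_shiftSeq {n : ℕ} (hX : Function.Periodic X n) (k : ℕ) :
    countR (shiftSeq k X) n = countR X n := by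
  have hshift : shiftSeq n X = X := funext hX
  have := countR_add X n k
  rw [hshift, add_comm n k, countR_add, add_comm (countR X n)] at this
  omega

theorem apply_eq_of_countR_eq {n p : ℕ} (hcount : countR X n = countR Y n) (hp : p < n)
    (h : ∀ i < n, i ≠ p → X i = Y i) : X p = Y p := by
  have hsplit : ∀ Z : ℕ → Bool, countR Z n =
      countR Z p + (Z p).toNat + countR (shiftSeq (p + 1) Z) (n - (p + 1)) := by
    intro Z
    rw [← countR_succ, ← countR_add, Nat.add_sub_cancel' hp]
  have hprefix : countR X p = countR Y p := countR_congr fun i hi => h i (by omega) (by omega)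
  have hsuffix : countR (shiftSeq (p + 1) X) (n - (p + 1)) =
      countR (shiftSeq (p + 1) Y) (n - (p + 1)) :=
    countR_congr fun i hi => h (i + (p + 1)) (by omega) (by omega)
  rw [hsplit X, hsplit Y, hprefix, hsuffix] at hcount
  cases hx : X p <;> cases hy : Y p <;> simp_all

end Counting

section FirstDiff

variable {X Y : ℕ → Bool} {d e : ℕ}

theorem FirstDiff.unique (hd : FirstDiff X Y d) (he : FirstDiff X Y e) : d = e := by
  by_contra hne
  rcases Nat.lt_or_gt_of_ne hne with h | h
  · exact hd.2 (he.1 d h)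
  · exact he.2 (hd.1 e h)

theorem FirstDiff.even_countR_iff (hd : FirstDiff X Y d) :
    Even (countR X (d + 1)) ↔ Odd (countR Y (d + 1)) := by
  rw [countR_succ, countR_succ, countR_congr hd.1, Bool.eq_not_of_ne hd.2]
  cases Y d <;> simp [parity_simps]

theorem seqLT_iff_exists_firstDiff :
    SeqLT X Y ↔ ∃ d, FirstDiff X Y d ∧ Odd (countR Y (d + 1)) := by
  simp only [SeqLT, blockEven_iff_even_countR]
  constructor
  · rintro ⟨d, hagree, hne, h⟩
    refine ⟨d, ⟨hagree, hne⟩, ?_⟩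
    rw [countR_succ, ← countR_congr hagree]
    rcases h with ⟨heven, -, hY⟩ | ⟨hodd, -, hY⟩ <;> simp_all [parity_simps]
  · rintro ⟨d, hd, hodd⟩
    refine ⟨d, hd.1, hd.2, ?_⟩
    have heven := hd.even_countR_iff.mpr hodd
    rw [countR_succ] at heven
    have hne := hd.2
    cases hX : X d <;> cases hY : Y d <;> simp_all [parity_simps]

theorem FirstDiff.congr {X' Y' : ℕ → Bool} (hd : FirstDiff X Y d)
    (hX : ∀ i ≤ d, X' i = X i) (hY : ∀ i ≤ d, Y' i = Y i) : FirstDiff X' Y' d :=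
  ⟨fun i hi => by rw [hX i hi.le, hY i hi.le]; exact hd.1 i hi,
    by rw [hX d le_rfl, hY d le_rfl]; exact hd.2⟩

theorem FirstDiff.symm (hd : FirstDiff X Y d) : FirstDiff Y X d :=
  ⟨fun i hi => (hd.1 i hi).symm, Ne.symm hd.2⟩

theorem FirstDiff.of_shiftSeq {a : ℕ} (h : ∀ i < a, X i = Y i)
    (hd : FirstDiff (shiftSeq a X) (shiftSeq a Y) e) : FirstDiff X Y (a + e) := by
  refine ⟨fun i hi => ?_, by simpa only [shiftSeq, add_comm e] using hd.2⟩
  rcases lt_or_ge i a with hia | hai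
  · exact h i hia
  · simpa only [shiftSeq, Nat.sub_add_cancel hai] using hd.1 (i - a) (by omega)

theorem SeqLT.odd_countR (h : SeqLT X Y) (hd : FirstDiff X Y d) : Odd (countR Y (d + 1)) := by
  obtain ⟨e, he, hodd⟩ := seqLT_iff_exists_firstDiff.mp h
  rwa [hd.unique he]

end FirstDiff

section Periodic

variable {X Y : ℕ → Bool} {n : ℕ}

theorem Function.Periodic.shiftSeq (hX : Function.Periodic X n) (k : ℕ) :
    Function.Periodic (shiftSeq k X) n := fun i => by
  simp only [_root_.shiftSeq, add_right_comm i n k, hX (i + k)]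

theorem Function.Periodic.shiftSeq_mod (hX : Function.Periodic X n) (k : ℕ) :
    _root_.shiftSeq (k % n) X = _root_.shiftSeq k X :=
  funext fun i => by
    simp only [_root_.shiftSeq]
    rw [← hX.map_mod_nat, ← hX.map_mod_nat (i + k), Nat.add_mod_mod]

theorem Function.Periodic.eq_of_forall_lt (hX : Function.Periodic X n)
    (hY : Function.Periodic Y n) (hn : 0 < n) (h : ∀ i < n, X i = Y i) : X = Y :=
  funext fun i => by rw [← hX.map_mod_nat, ← hY.map_mod_nat]; exact h _ (Nat.mod_lt _ hn)

end Periodic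

theorem periodic_minPer {A : ℕ → Bool} (h : 0 < minPer A) : Function.Periodic A (minPer A) :=
  (Nat.sInf_mem (Nat.nonempty_of_pos_sInf h)).2

theorem SeqMaximal.seqLT_shiftSeq {A : ℕ → Bool} (hmax : SeqMaximal A) {k : ℕ} (hk : 0 < k)
    (hkn : k < minPer A) : SeqLT (shiftSeq k A) A := by
  refine (hmax k).resolve_right fun heq => ?_
  have : minPer A ≤ k := Nat.sInf_le ⟨hk, congrFun heq⟩
  omega

section FlipAt

variable {A : ℕ → Bool} {n : ℕ}

theorem flipAt_of_lt_pred {i : ℕ} (h : i < n - 1) : flipAt n A i = A i :=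
  if_neg (by rw [Nat.mod_eq_of_lt (by omega)]; omega)

theorem flipAt_pred : flipAt n A (n - 1) = !A (n - 1) :=
  if_pos (by rcases n with _ | n <;> simp)

theorem Function.Periodic.flipAt (hA : Function.Periodic A n) :
    Function.Periodic (_root_.flipAt n A) n := fun i => by
  simp only [_root_.flipAt, Nat.add_mod_right, hA i]

end FlipAt

section FlipShift

variable {A : ℕ → Bool} {n k m : ℕ}

theorem seqLT_shiftSeq_flipAt_of_add_lt (hm : FirstDiff (shiftSeq k A) A m)
    (hodd : Odd (countR A (m + 1))) (h : m + k < n - 1) :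
    SeqLT (shiftSeq k (flipAt n A)) (flipAt n A) := by
  have hfar : ∀ i ≤ m, flipAt n A i = A i := fun i hi => flipAt_of_lt_pred (by omega)
  refine seqLT_iff_exists_firstDiff.mpr ⟨m, hm.congr (fun i hi => ?_) hfar, ?_⟩
  · exact flipAt_of_lt_pred (by omega)
  · rwa [countR_congr fun i hi => hfar i (by omega)]

theorem seqLT_shiftSeq_flipAt_of_le_add (hA : Function.Periodic A n)
    (hlt : SeqLT (shiftSeq (n - k) A) A) (hk : 0 < k) (hkn : k < n)
    (hm : FirstDiff (shiftSeq k A) A m) (hodd : Odd (countR A (m + 1))) (h : n ≤ m + k) :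
    SeqLT (shiftSeq k (flipAt n A)) (flipAt n A) := by
  have hwrap : shiftSeq (n - k) (shiftSeq k A) = A :=
    funext fun i => by simp only [shiftSeq, add_assoc, Nat.sub_add_cancel hkn.le, hA i]
  -- the comparison of `S^k A` with `A` past position `n - k` is that of `A` with `S^(n-k) A`
  have hdiff : FirstDiff (shiftSeq (n - k) A) A (m - (n - k)) := by
    refine ⟨fun i hi => ?_, ?_⟩
    · have := hm.1 (i + (n - k)) (by omega)
      rw [← congrFun hwrap i]
      exact this.symm
    · have := hm.2
      rw [show m = m - (n - k) + (n - k) by omega] at this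
      rw [← congrFun hwrap (m - (n - k))]
      exact Ne.symm this
  have hsplit : countR (shiftSeq k A) (m + 1) = countR A (n - k) + countR A (m - (n - k) + 1) := by
    rw [show m + 1 = n - k + (m - (n - k) + 1) by omega, countR_add, hwrap,
      countR_congr fun i hi => hm.1 i (by omega)]
  have hblock : Odd (countR A (n - k)) := by
    have heven := hm.even_countR_iff.mpr hodd
    have hodd' := hlt.odd_countR hdiff
    rw [hsplit, Nat.even_add] at heven
    rw [← Nat.not_even_iff_odd] at hodd' ⊢
    exact fun he => hodd' (heven.mp he)
  -- the flipped symbol of `S^k Ã` comes first, at position `n - k - 1 < m`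
  have hfirst : FirstDiff (shiftSeq k (flipAt n A)) (flipAt n A) (n - k - 1) := by
    refine ⟨fun i hi => ?_, ?_⟩
    · show flipAt n A (i + k) = flipAt n A i
      rw [flipAt_of_lt_pred (by omega), flipAt_of_lt_pred (by omega)]
      exact hm.1 i (by omega)
    · show flipAt n A (n - k - 1 + k) ≠ flipAt n A (n - k - 1)
      have hprev : A (n - 1) = A (n - k - 1) := by
        rw [show n - 1 = n - k - 1 + k by omega]
        exact hm.1 _ (by omega)
      rw [show n - k - 1 + k = n - 1 by omega, flipAt_pred, flipAt_of_lt_pred (by omega), hprev]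
      exact Bool.not_ne_self _
  refine seqLT_iff_exists_firstDiff.mpr ⟨n - k - 1, hfirst, ?_⟩
  rwa [countR_congr fun i hi => flipAt_of_lt_pred (by omega), show n - k - 1 + 1 = n - k by omega]

theorem seqLE_shiftSeq_flipAt_of_add_eq_pred (hA : Function.Periodic A n)
    (hlt : SeqLT (shiftSeq (m + 1) A) A) (hk : 0 < k) (hm : FirstDiff (shiftSeq k A) A m)
    (hodd : Odd (countR A (m + 1))) (h : m + k = n - 1) :
    SeqLE (shiftSeq k (flipAt n A)) (flipAt n A) := by
  have hhead : ∀ i ≤ m, shiftSeq k (flipAt n A) i = flipAt n A i := by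
    intro i hi
    show flipAt n A (i + k) = flipAt n A i
    rcases hi.lt_or_eq with hi | rfl
    · rw [flipAt_of_lt_pred (by omega), flipAt_of_lt_pred (by omega)]
      exact hm.1 i hi
    · rw [h, flipAt_pred, flipAt_of_lt_pred (by omega), ← h]
      exact (Bool.eq_not_of_ne hm.2.symm).symm
  have htail : ∀ u < k - 1, shiftSeq (m + 1) (shiftSeq k (flipAt n A)) u = A u ∧
      shiftSeq (m + 1) (flipAt n A) u = shiftSeq (m + 1) A u := by
    intro u hu
    refine ⟨?_, flipAt_of_lt_pred (by omega)⟩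
    show flipAt n A (u + (m + 1) + k) = A u
    rw [show u + (m + 1) + k = u + n by omega, hA.flipAt, flipAt_of_lt_pred (by omega)]
  obtain ⟨e, he, hodde⟩ := seqLT_iff_exists_firstDiff.mp hlt
  by_cases hek : e < k - 1
  · left
    have hdiff : FirstDiff (shiftSeq k (flipAt n A)) (flipAt n A) (m + 1 + e) :=
      FirstDiff.of_shiftSeq (fun i hi => hhead i (by omega))
        (he.symm.congr (fun u hu => (htail u (by omega)).1) fun u hu => (htail u (by omega)).2)
    refine seqLT_iff_exists_firstDiff.mpr ⟨m + 1 + e, hdiff, ?_⟩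
    have heven := he.even_countR_iff.mpr hodde
    rw [countR_congr fun i hi => flipAt_of_lt_pred (by omega), add_assoc, countR_add]
    exact hodd.add_even heven
  · right
    have hagree : ∀ i < n - 1, shiftSeq k (flipAt n A) i = flipAt n A i := by
      intro i hi
      rcases le_or_gt i m with him | him
      · exact hhead i him
      · have htail' := htail (i - (m + 1)) (by omega)
        have hshift := he.1 (i - (m + 1)) (by omega)
        simp only [shiftSeq, Nat.sub_add_cancel (show m + 1 ≤ i by omega)] at htail' hshift ⊢
        rw [htail'.1, htail'.2, hshift]
    refine (hA.flipAt.shiftSeq k).eq_of_forall_lt hA.flipAt (by omega) fun i hi => ?_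
    rcases lt_or_ge i (n - 1) with hi' | hi'
    · exact hagree i hi'
    · rw [show i = n - 1 by omega]
      exact apply_eq_of_countR_eq (countR_shiftSeq hA.flipAt k) (by omega)
        fun j hj hjn => hagree j (by omega)

end FlipShift

theorem seqLE_shiftSeq_flipAt {A : ℕ → Bool} {n k : ℕ} (hA : Function.Periodic A n)
    (hlt : ∀ j, 0 < j → j < n → SeqLT (shiftSeq j A) A) (hk : 0 < k) (hkn : k < n) :
    SeqLE (shiftSeq k (flipAt n A)) (flipAt n A) := by
  obtain ⟨m, hm, hodd⟩ := seqLT_iff_exists_firstDiff.mp (hlt k hk hkn)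
  rcases lt_trichotomy (m + k) (n - 1) with h | h | h
  · exact Or.inl (seqLT_shiftSeq_flipAt_of_add_lt hm hodd h)
  · exact seqLE_shiftSeq_flipAt_of_add_eq_pred hA (hlt (m + 1) (by omega) (by omega)) hk hm hodd h
  · exact Or.inl (seqLT_shiftSeq_flipAt_of_le_add hA (hlt (n - k) (by omega) (by omega)) hk hkn
      hm hodd (by omega))

/-- If `A` is a maximal periodic admissible sequence of minimal
period `n`, then the sequence obtained by flipping the symbol at every position
congruent to `n - 1` modulo `n` is also maximal. -/
theorem stmt3 (A : ℕ → Bool) (n : ℕ) (hn : 0 < n) (hper : minPer A = n)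
    (hmax : SeqMaximal A) :
    SeqMaximal (flipAt n A) := by
  subst hper
  have hA := periodic_minPer hn
  intro k
  rw [← hA.flipAt.shiftSeq_mod]
  rcases (k % minPer A).eq_zero_or_pos with h0 | hpos
  · exact Or.inr (by rw [h0]; rfl)
  · exact seqLE_shiftSeq_flipAt hA (fun j hj hjn => hmax.seqLT_shiftSeq hj hjn) hpos
      (Nat.mod_lt _ hn)
end

section
/- Let A be a periodic admissible sequence of minimal period n. If the minimal period of μ(A) equals n, then μ(μ(A)) = A. -/
/-!
Encode a sequence `A` by its prefix parities `P j` (the parity of the block `A_0 ⋯ A_{j-1}`).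
This turns the twisted order into the lexicographic order and the shift `S^k` into
`j ↦ P (j + k) xor P k`. With `M` the maximal shift of `A` and `B` the sequence obtained from `M`
by flipping the last symbol of every period, `μ (μ A) = A` reduces to `B` being maximal as soon
as its minimal period is `n`. The parities of `B` agree with those of `M` below `n` and are
flipped at `n`, so a shift `S^k B` can fail to lie below `B` only when `S^k B` and `B` share an
odd block of length `n - k`. Past that block the comparison becomes the one between `S^{n-k} B`
and `B`, and odd borders of lengths `n - k` and `k` cannot coexist, since together they would
make `k` a period of `B`.
-/

open Function

section Lex

variable {x y : ℕ → Bool} {m : ℕ}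

theorem toLex_lt_toLex_iff :
    toLex x < toLex y ↔ ∃ i, (∀ j < i, x j = y j) ∧ x i < y i := Iff.rfl

theorem toLex_lt_iff_shiftSeq (h : ∀ j < m, x j = y j) :
    toLex x < toLex y ↔ toLex (shiftSeq m x) < toLex (shiftSeq m y) := by
  simp only [toLex_lt_toLex_iff]
  constructor
  · rintro ⟨d, hd, hlt⟩
    obtain ⟨e, rfl⟩ : ∃ e, d = e + m := by
      refine ⟨d - m, (Nat.sub_add_cancel (not_lt.1 fun hdm => ?_)).symm⟩
      exact hlt.ne (h d hdm)
    exact ⟨e, fun j hj => hd (j + m) (by omega), hlt⟩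
  · rintro ⟨e, he, hlt⟩
    refine ⟨e + m, fun j hj => ?_, hlt⟩
    rcases lt_or_ge j m with hjm | hjm
    · exact h j hjm
    · simpa [shiftSeq, Nat.sub_add_cancel hjm] using he (j - m) (by omega)

theorem toLex_not_lt_not :
    toLex (fun j => !x j) < toLex (fun j => !y j) ↔ toLex y < toLex x := by
  simp only [toLex_lt_toLex_iff]
  constructor <;> rintro ⟨d, hd, hlt⟩ <;>
    refine ⟨d, fun j hj => by simpa using (hd j hj).symm, ?_⟩ <;>
    revert hlt <;> cases x d <;> cases y d <;> decide

end Lex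

section Shift

variable {A : ℕ → Bool}

theorem shiftSeq_shiftSeq (k m : ℕ) (A : ℕ → Bool) :
    shiftSeq k (shiftSeq m A) = shiftSeq (k + m) A := by
  funext i
  simp [shiftSeq, Nat.add_assoc]

theorem iterate_shiftSeq_one (k : ℕ) : (shiftSeq 1)^[k] = shiftSeq k := by
  induction k with
  | zero => funext A i; rfl
  | succ k ih => rw [iterate_succ', ih, comp_def]; funext A; rw [shiftSeq_shiftSeq, add_comm]

theorem isPeriodicPt_shiftSeq_one_iff {k : ℕ} :
    IsPeriodicPt (shiftSeq 1) k A ↔ shiftSeq k A = A := by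
  rw [IsPeriodicPt, IsFixedPt, iterate_shiftSeq_one]

theorem minPer_eq_minimalPeriod (A : ℕ → Bool) : minPer A = minimalPeriod (shiftSeq 1) A := by
  simp only [minPer, minimalPeriod_eq_sInf_n_pos_IsPeriodicPt, isPeriodicPt_shiftSeq_one_iff,
    IsPeriodicSeq, funext_iff, shiftSeq, gt_iff_lt]

theorem shiftSeq_minimalPeriod (A : ℕ → Bool) : shiftSeq (minimalPeriod (shiftSeq 1) A) A = A :=
  isPeriodicPt_shiftSeq_one_iff.1 (isPeriodicPt_minimalPeriod _ _)

theorem shiftSeq_mod_minimalPeriod (k : ℕ) (A : ℕ → Bool) :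
    shiftSeq (k % minimalPeriod (shiftSeq 1) A) A = shiftSeq k A := by
  simpa only [iterate_shiftSeq_one] using iterate_mod_minimalPeriod_eq (f := shiftSeq 1) (x := A)

theorem minimalPeriod_shiftSeq (hA : 0 < minimalPeriod (shiftSeq 1) A) (k : ℕ) :
    minimalPeriod (shiftSeq 1) (shiftSeq k A) = minimalPeriod (shiftSeq 1) A := by
  simpa only [iterate_shiftSeq_one] using
    minimalPeriod_apply_iterate (minimalPeriod_pos_iff_mem_periodicPts.1 hA) k

end Shift

def prefixParity (A : ℕ → Bool) : ℕ → Bool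
  | 0 => false
  | j + 1 => prefixParity A j ^^ A j

def xorShift (k : ℕ) (p : ℕ → Bool) : ℕ → Bool := fun j => p (j + k) ^^ p k

def QuasiPeriodic (n : ℕ) (p : ℕ → Bool) : Prop := ∀ j, p (j + n) = (p j ^^ p n)

section PrefixParity

variable {A B : ℕ → Bool}

theorem apply_eq_prefixParity_xor (A : ℕ → Bool) (j : ℕ) :
    A j = (prefixParity A j ^^ prefixParity A (j + 1)) := by
  simp [prefixParity]

theorem prefixParity_injective : Injective prefixParity := fun A B h => by
  funext j
  rw [apply_eq_prefixParity_xor A, apply_eq_prefixParity_xor B, h]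

theorem prefixParity_congr {j : ℕ} (h : ∀ i < j, A i = B i) :
    prefixParity A j = prefixParity B j := by
  induction j with
  | zero => rfl
  | succ j ih => simp only [prefixParity, ih fun i hi => h i (by omega), h j j.lt_succ_self]

theorem blockEven_iff (A : ℕ → Bool) (j : ℕ) : BlockEven A j ↔ prefixParity A j = false := by
  induction j with
  | zero => simp [BlockEven, prefixParity]
  | succ j ih =>
    rw [BlockEven, Finset.range_add_one, Finset.filter_insert] at *
    by_cases hA : A j = true
    · rw [if_pos hA, Finset.card_insert_of_notMem (by simp), Nat.even_add_one, ih]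
      simp [prefixParity, hA]
    · rw [if_neg hA, ih]
      simp [prefixParity, Bool.eq_false_iff.2 hA]

theorem prefixParity_shiftSeq (k : ℕ) (A : ℕ → Bool) :
    prefixParity (shiftSeq k A) = xorShift k (prefixParity A) := by
  funext j
  induction j with
  | zero => simp [prefixParity, xorShift]
  | succ j ih =>
    simp only [prefixParity, ih, xorShift, Nat.add_right_comm j 1 k, shiftSeq]
    cases prefixParity A (j + k) <;> cases prefixParity A k <;> cases A (j + k) <;> rfl

theorem xorShift_prefixParity_eq_iff {k : ℕ} :
    xorShift k (prefixParity A) = prefixParity A ↔ shiftSeq k A = A := by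
  rw [← prefixParity_shiftSeq, prefixParity_injective.eq_iff]

theorem quasiPeriodic_prefixParity {n : ℕ} (h : shiftSeq n A = A) :
    QuasiPeriodic n (prefixParity A) := fun j => by
  have := congrFun (xorShift_prefixParity_eq_iff.2 h) j
  rw [xorShift] at this
  rw [← this, Bool.xor_assoc, Bool.xor_self, Bool.xor_false]

theorem seqLT_iff : SeqLT A B ↔ toLex (prefixParity A) < toLex (prefixParity B) := by
  rw [toLex_lt_toLex_iff]
  constructor
  · rintro ⟨n, hagree, -, hcase⟩
    have hn : prefixParity A n = prefixParity B n := prefixParity_congr hagree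
    refine ⟨n + 1, fun j hj => prefixParity_congr fun i hi => hagree i (by omega), ?_⟩
    simp only [prefixParity, ← hn]
    rcases hcase with ⟨he, ha, hb⟩ | ⟨he, ha, hb⟩
    · rw [(blockEven_iff A n).1 he, ha, hb]; decide
    · rw [blockEven_iff, Bool.not_eq_false] at he
      rw [he, ha, hb]; decide
  · rintro ⟨i, hagree, hlt⟩
    obtain ⟨n, rfl⟩ : ∃ n, i = n + 1 := Nat.exists_eq_succ_of_ne_zero fun h => by
      subst h; exact lt_irrefl _ hlt
    have hn := hagree n n.lt_succ_self
    refine ⟨n, fun j hj => ?_, ?_⟩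
    · rw [apply_eq_prefixParity_xor A, apply_eq_prefixParity_xor B, hagree j (by omega),
        hagree (j + 1) (by omega)]
    · simp only [prefixParity, hn] at hlt
      rw [blockEven_iff, hn]
      revert hlt; cases prefixParity B n <;> cases A n <;> cases B n <;> decide

theorem seqLE_iff : SeqLE A B ↔ toLex (prefixParity A) ≤ toLex (prefixParity B) := by
  rw [SeqLE, seqLT_iff, le_iff_lt_or_eq, toLex_inj, prefixParity_injective.eq_iff]
  exact Iff.rfl

theorem SeqLE.antisymm (h₁ : SeqLE A B) (h₂ : SeqLE B A) : A = B := by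
  rw [seqLE_iff] at h₁ h₂
  exact prefixParity_injective (toLex_inj.1 (le_antisymm h₁ h₂))

end PrefixParity

section QuasiPeriodic

variable {n k m : ℕ} {p q : ℕ → Bool}

theorem shiftSeq_eq_xorShift_xor (m : ℕ) (p : ℕ → Bool) :
    shiftSeq m p = fun j => xorShift m p j ^^ p m := by
  funext j
  simp [shiftSeq, xorShift]

theorem quasiPeriodic_xorShift (hq : QuasiPeriodic n q) (k : ℕ) :
    QuasiPeriodic n (xorShift k q) := fun j => by
  simp only [xorShift, Nat.add_right_comm j n k, hq (j + k), Nat.add_comm n k, hq k]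
  cases q (j + k) <;> cases q k <;> cases q n <;> rfl

theorem QuasiPeriodic.shiftSeq_xorShift (hq : QuasiPeriodic (k + m) q) :
    shiftSeq m (xorShift k q) = fun j => q j ^^ xorShift k q m := by
  funext j
  simp only [shiftSeq, xorShift, Nat.add_assoc, Nat.add_comm m k, hq j, Bool.xor_assoc]

theorem QuasiPeriodic.eq_of_forall_le (hn : 0 < n) (hp : QuasiPeriodic n p)
    (hq : QuasiPeriodic n q) (h : ∀ j ≤ n, p j = q j) : p = q := by
  funext j
  induction j using Nat.strong_induction_on with
  | _ j ih =>
    rcases le_or_gt j n with hj | hj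
    · exact h j hj
    · obtain ⟨i, rfl⟩ : ∃ i, j = i + n := ⟨j - n, by omega⟩
      rw [hp, hq, ih i (by omega), h n le_rfl]

/-- In sequence terms: `S^k B` agrees with `B` on its first `m` symbols, and this common
block is odd. -/
def OddBorder (q : ℕ → Bool) (k m : ℕ) : Prop :=
  (∀ j ≤ m, xorShift k q j = q j) ∧ q m = true

/-- Past an odd border the comparison of `S^k B` with `B` turns into that of `B` with
`S^m B`, and the oddness reverses it. -/
theorem OddBorder.lt_iff (hq : QuasiPeriodic (k + m) q) (hb : OddBorder q k m) :
    toLex (xorShift k q) < toLex q ↔ toLex (xorShift m q) < toLex q := by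
  rw [toLex_lt_iff_shiftSeq fun j hj => hb.1 j hj.le, hq.shiftSeq_xorShift,
    shiftSeq_eq_xorShift_xor, hb.1 m le_rfl, hb.2]
  simp only [Bool.xor_true]
  exact toLex_not_lt_not

theorem OddBorder.xorShift_eq (hn : 0 < k + m) (hq : QuasiPeriodic (k + m) q)
    (hkm : OddBorder q k m) (hmk : OddBorder q m k) : xorShift k q = q := by
  refine (quasiPeriodic_xorShift hq k).eq_of_forall_le hn hq fun j hj => ?_
  rcases le_or_gt j m with hjm | hjm
  · exact hkm.1 j hjm
  · obtain ⟨i, rfl⟩ : ∃ i, j = i + m := ⟨j - m, by omega⟩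
    have hl := congrFun hq.shiftSeq_xorShift i
    have hr := congrFun (shiftSeq_eq_xorShift_xor m q) i
    simp only [shiftSeq] at hl hr
    rw [hl, hr, hkm.1 m le_rfl, hmk.1 i (by omega)]

/-- `p` and `q` play the parity sequences of `M` and of `M` with the last symbol of every period
flipped. -/
theorem xorShift_lt_or_oddBorder (hn : k + m = n) (hk : 0 < k) (hm : 0 < m)
    (hp : QuasiPeriodic n p) (hpq : ∀ j < n, p j = q j) (hqn : q n = !p n)
    (hpk : toLex (xorShift k p) < toLex p) (hpm : toLex (xorShift m p) < toLex p) :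
    toLex (xorShift k q) < toLex q ∨ OddBorder q k m := by
  subst hn
  have hqk : ∀ j < m, xorShift k q j = xorShift k p j := fun j hj => by
    simp only [xorShift, hpq (j + k) (by omega), hpq k (by omega)]
  obtain ⟨d, hd, hlt⟩ := toLex_lt_toLex_iff.1 hpk
  rcases lt_or_ge d m with hdm | hmd
  · refine Or.inl (toLex_lt_toLex_iff.2 ⟨d, fun j hj => ?_, ?_⟩)
    · rw [hqk j (by omega), hd j hj, hpq j (by omega)]
    · rwa [hqk d hdm, ← hpq d (by omega)]
  have hagree : ∀ j < m, xorShift k p j = p j := fun j hj => hd j (by omega)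
  have hqm : xorShift k q m = !xorShift k p m := by
    simp only [xorShift, Nat.add_comm m k, hqn, hpq k (by omega), Bool.not_xor]
  cases hv : p m <;> cases ha : xorShift k p m
  · -- the tail of `S^k M` past the even block is `M` itself, so `M < S^m M`
    refine absurd hpm (lt_asymm ?_)
    rw [toLex_lt_iff_shiftSeq hagree, hp.shiftSeq_xorShift, shiftSeq_eq_xorShift_xor, ha, hv]
      at hpk
    simp only [Bool.xor_false] at hpk
    exact hpk
  · exact absurd hpk (lt_asymm (toLex_lt_toLex_iff.2
      ⟨m, fun j hj => (hagree j hj).symm, by simp [hv, ha]⟩))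
  · refine Or.inr ⟨fun j hj => ?_, by rw [← hpq m (by omega), hv]⟩
    rcases hj.lt_or_eq with hj | rfl
    · rw [hqk j hj, hagree j hj, hpq j (by omega)]
    · rw [hqm, ha, ← hpq j (by omega), hv]; rfl
  · exact Or.inl (toLex_lt_toLex_iff.2 ⟨m, fun j hj => by rw [hqk j hj, hagree j hj,
      hpq j (by omega)], by rw [hqm, ha, ← hpq m (by omega), hv]; decide⟩)

theorem xorShift_lt_of_flip (hn : 0 < n) (hp : QuasiPeriodic n p) (hq : QuasiPeriodic n q)
    (hpq : ∀ j < n, p j = q j) (hqn : q n = !p n)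
    (hpmax : ∀ k, 0 < k → k < n → toLex (xorShift k p) < toLex p)
    (hqper : ∀ k, 0 < k → k < n → xorShift k q ≠ q) (hk : 0 < k) (hkn : k < n) :
    toLex (xorShift k q) < toLex q := by
  obtain ⟨m, hkm⟩ : ∃ m, k + m = n := ⟨n - k, by omega⟩
  have hm : 0 < m := by omega
  have hmk : m + k = n := by omega
  rcases xorShift_lt_or_oddBorder hkm hk hm hp hpq hqn (hpmax k hk hkn) (hpmax m hm (by omega))
    with h | hbk
  · exact h
  rcases xorShift_lt_or_oddBorder hmk hm hk hp hpq hqn (hpmax m hm (by omega)) (hpmax k hk hkn)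
    with h | hbm
  · exact (hbk.lt_iff (hkm ▸ hq)).2 h
  · exact absurd (hbk.xorShift_eq (by omega) (hkm ▸ hq) hbm) (hqper k hk hkn)

end QuasiPeriodic

section Maximal

variable {A M : ℕ → Bool} {n : ℕ}

theorem seqMaximal_iff_of_minimalPeriod (hn : 0 < n) (hA : minimalPeriod (shiftSeq 1) A = n) :
    SeqMaximal A ↔
      ∀ k, 0 < k → k < n → toLex (xorShift k (prefixParity A)) < toLex (prefixParity A) := by
  simp only [SeqMaximal, seqLE_iff, prefixParity_shiftSeq]
  constructor
  · intro h k hk hkn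
    refine (h k).lt_of_ne fun he => ?_
    refine not_isPeriodicPt_of_pos_of_lt_minimalPeriod hk.ne' (hA ▸ hkn) ?_
    exact isPeriodicPt_shiftSeq_one_iff.2 (xorShift_prefixParity_eq_iff.1 (toLex_inj.1 he))
  · intro h k
    rw [← prefixParity_shiftSeq, ← shiftSeq_mod_minimalPeriod, hA, prefixParity_shiftSeq]
    rcases (k % n).eq_zero_or_pos with hk | hk
    · rw [hk, xorShift_prefixParity_eq_iff.2 rfl]
    · exact (h _ hk (Nat.mod_lt k hn)).le

theorem prefixParity_flipAt_of_lt {j : ℕ} (hj : j < n) :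
    prefixParity (flipAt n M) j = prefixParity M j :=
  prefixParity_congr fun i hi => by
    rw [flipAt, Nat.mod_eq_of_lt (by omega), if_neg (by omega)]

theorem prefixParity_flipAt_self (hn : 0 < n) :
    prefixParity (flipAt n M) n = !prefixParity M n := by
  obtain ⟨n, rfl⟩ := Nat.exists_eq_add_one_of_ne_zero hn.ne'
  simp only [prefixParity, prefixParity_flipAt_of_lt n.lt_succ_self, flipAt,
    Nat.mod_eq_of_lt n.lt_succ_self, Nat.add_sub_cancel, if_pos, Bool.xor_not]

theorem shiftSeq_self_flipAt (n : ℕ) (M : ℕ → Bool) :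
    shiftSeq n (flipAt n M) = flipAt n (shiftSeq n M) := by
  funext i
  simp [shiftSeq, flipAt]

theorem flipAt_flipAt (n : ℕ) (M : ℕ → Bool) : flipAt n (flipAt n M) = M := by
  funext i
  by_cases h : i % n = n - 1 <;> simp [flipAt, h]

theorem seqMaximal_flipAt (hn : 0 < n) (hM : minimalPeriod (shiftSeq 1) M = n)
    (hB : minimalPeriod (shiftSeq 1) (flipAt n M) = n) (hmax : SeqMaximal M) :
    SeqMaximal (flipAt n M) := by
  rw [seqMaximal_iff_of_minimalPeriod hn hM] at hmax
  rw [seqMaximal_iff_of_minimalPeriod hn hB]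
  intro k hk hkn
  refine xorShift_lt_of_flip hn
    (quasiPeriodic_prefixParity (by simpa only [hM] using shiftSeq_minimalPeriod M))
    (quasiPeriodic_prefixParity (by simpa only [hB] using shiftSeq_minimalPeriod (flipAt n M)))
    (fun j hj => (prefixParity_flipAt_of_lt hj).symm) (prefixParity_flipAt_self hn) hmax
    (fun k hk hkn he => ?_) hk hkn
  refine not_isPeriodicPt_of_pos_of_lt_minimalPeriod hk.ne' (hB ▸ hkn) ?_
  exact isPeriodicPt_shiftSeq_one_iff.2 (xorShift_prefixParity_eq_iff.1 he)

theorem exists_seqMaximal_shiftSeq (hA : 0 < minimalPeriod (shiftSeq 1) A) :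
    ∃ m < minimalPeriod (shiftSeq 1) A, SeqMaximal (shiftSeq m A) := by
  obtain ⟨m, hm, hmax⟩ := (Finset.range (minimalPeriod (shiftSeq 1) A)).exists_max_image
    (fun j => toLex (prefixParity (shiftSeq j A))) ⟨0, Finset.mem_range.2 hA⟩
  refine ⟨m, Finset.mem_range.1 hm, fun k => ?_⟩
  rw [seqLE_iff, shiftSeq_shiftSeq, ← shiftSeq_mod_minimalPeriod]
  exact hmax _ (Finset.mem_range.2 (Nat.mod_lt _ hA))

theorem shiftSeq_add_minimalPeriod_sub (a : ℕ) {b : ℕ} (hb : b ≤ minimalPeriod (shiftSeq 1) A) :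
    shiftSeq (a + minimalPeriod (shiftSeq 1) A - b) (shiftSeq b A) = shiftSeq a A := by
  rw [shiftSeq_shiftSeq, Nat.sub_add_cancel (by omega), ← shiftSeq_shiftSeq,
    shiftSeq_minimalPeriod]

theorem eq_of_seqMaximal_shiftSeq {m₁ m₂ : ℕ} (h₁ : m₁ < minimalPeriod (shiftSeq 1) A)
    (h₂ : m₂ < minimalPeriod (shiftSeq 1) A) (hM₁ : SeqMaximal (shiftSeq m₁ A))
    (hM₂ : SeqMaximal (shiftSeq m₂ A)) : m₁ = m₂ := by
  refine iterate_injOn_Iio_minimalPeriod h₁ h₂ ?_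
  simp only [iterate_shiftSeq_one]
  refine SeqLE.antisymm ?_ ?_
  · simpa only [shiftSeq_add_minimalPeriod_sub m₁ h₂.le] using hM₂ (m₁ + minimalPeriod (shiftSeq 1) A - m₂)
  · simpa only [shiftSeq_add_minimalPeriod_sub m₂ h₁.le] using hM₁ (m₂ + minimalPeriod (shiftSeq 1) A - m₁)

theorem sInf_seqMaximal_shiftSeq {m : ℕ} (hA : 0 < minimalPeriod (shiftSeq 1) A)
    (hm : m < minimalPeriod (shiftSeq 1) A) (hM : SeqMaximal (shiftSeq m A)) :
    sInf {m' | SeqMaximal (shiftSeq m' A)} = m := by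
  refine le_antisymm (Nat.sInf_le hM) (le_csInf ⟨m, hM⟩ fun b hb => ?_)
  rw [Set.mem_ofPred_eq, ← shiftSeq_mod_minimalPeriod] at hb
  rw [eq_of_seqMaximal_shiftSeq hm (Nat.mod_lt b hA) hM hb]
  exact Nat.mod_le b _

theorem muSeq_eq (hn : 0 < n) (hA : minimalPeriod (shiftSeq 1) A = n) {m : ℕ} (hm : m < n)
    (hM : SeqMaximal (shiftSeq m A)) :
    muSeq A = shiftSeq (n - m) (flipAt n (shiftSeq m A)) := by
  subst hA
  rw [muSeq, minPer_eq_minimalPeriod, sInf_seqMaximal_shiftSeq hn hm hM]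

end Maximal

/-- If `A` is a periodic admissible sequence of minimal period `n`
and the minimal period of `μ A` equals `n`, then `μ (μ A) = A`. -/
theorem stmt4 (A : ℕ → Bool) (n : ℕ) (hn : 0 < n) (hper : minPer A = n)
    (hmu : minPer (muSeq A) = n) :
    muSeq (muSeq A) = A := by
  rw [minPer_eq_minimalPeriod] at hper hmu
  obtain ⟨m, hm, hmax⟩ := exists_seqMaximal_shiftSeq (hper ▸ hn)
  rw [hper] at hm
  have hM : minimalPeriod (shiftSeq 1) (shiftSeq m A) = n := by
    rw [minimalPeriod_shiftSeq (hper ▸ hn), hper]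
  have hSm : shiftSeq m (muSeq A) = flipAt n (shiftSeq m A) := by
    rw [muSeq_eq hn hper hm hmax, shiftSeq_shiftSeq, Nat.add_sub_cancel' hm.le,
      shiftSeq_self_flipAt, ← hM, shiftSeq_minimalPeriod]
  have hB : minimalPeriod (shiftSeq 1) (flipAt n (shiftSeq m A)) = n := by
    rw [← hSm, minimalPeriod_shiftSeq (hmu ▸ hn), hmu]
  have hBmax : SeqMaximal (shiftSeq m (muSeq A)) := hSm ▸ seqMaximal_flipAt hn hM hB hmax
  rw [muSeq_eq hn hmu hm hBmax, hSm, flipAt_flipAt, shiftSeq_shiftSeq, Nat.sub_add_cancel hm.le,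
    ← hper, shiftSeq_minimalPeriod]
end

section
/- Let g_k (k = 1, 2, …) be a sequence of C¹ maps ℝ → ℝ converging to a C¹ map g in the C¹ topology (i.e., g_k → g and g_k′ → g′ uniformly on every compact subset of ℝ). Suppose each g_k has a periodic orbit O_k = {q_1(k) < q_2(k) < ⋯ < q_m(k)} of minimal period m, and for each i the point q_i(k) converges as k → ∞ to a point q_i, which is then a periodic point of g of period m. If the minimal period k₀ of the limit orbit {q_1, …, q_m} under g is smaller than m, then k₀ = m/2. -/
/-!
Pass to a subsequence along which the combinatorial type `π` of the orbits
(`g k (q k i) = q k (π i)`) is constant; then `π` is an `m`-cycle and `Q ∘ π = glim ∘ Q`.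
If `a ≠ b` but `Q a = Q b`, the quotient `(q k (π^[n] a) - q k (π^[n] b)) / (q k a - q k b)` is a
product of slopes of `g k`, so by the mean value theorem it tends to the multiplier
`∏ t < n, glim' (glim^[t] (Q a))`. Over a full period the quotient is `1`, so the multiplier over
`k₀` steps is nonzero, and for large `k` its sign shows that `σ = π^[k₀]` is strictly monotone or
strictly antitone on the cluster `{b | Q b = Q a}`, which `σ` preserves. Either way `σ ∘ σ` is a
strictly monotone self-map of a finite linear order, hence the identity, so `m ∣ 2 * k₀`.
-/

open Filter Topology Function Set Finset

theorem TendstoLocallyUniformly.mono_left {ι α β : Type*} [TopologicalSpace α] [UniformSpace β]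
    {F : ι → α → β} {f : α → β} {p p' : Filter ι} (h : TendstoLocallyUniformly F f p)
    (hp : p' ≤ p) : TendstoLocallyUniformly F f p' :=
  fun u hu x => (h u hu x).imp fun _ ht => ⟨ht.1, hp ht.2⟩

theorem exists_deriv_eq_slope_mem_uIcc {f : ℝ → ℝ} (hf : Differentiable ℝ f) {a b : ℝ}
    (hab : a ≠ b) : ∃ c ∈ uIcc a b, deriv f c = slope f a b := by
  wlog h : a < b generalizing a b
  · obtain ⟨c, hc, hc'⟩ := this hab.symm (lt_of_le_of_ne (not_lt.1 h) hab.symm)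
    exact ⟨c, uIcc_comm a b ▸ hc, hc'.trans (slope_comm f b a)⟩
  obtain ⟨c, hc, hc'⟩ :=
    exists_deriv_eq_slope' f h hf.continuous.continuousOn hf.differentiableOn
  exact ⟨c, Icc_subset_uIcc (Ioo_subset_Icc_self hc), hc'⟩

theorem tendsto_slope_of_tendstoLocallyUniformly_deriv {ι : Type*} {l : Filter ι}
    {f : ι → ℝ → ℝ} {f₀ : ℝ → ℝ} (hf : ∀ i, Differentiable ℝ (f i))
    (hd : TendstoLocallyUniformly (fun i => deriv (f i)) (deriv f₀) l) {X : ℝ}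
    (hd₀ : ContinuousAt (deriv f₀) X) {x y : ι → ℝ} (hxy : ∀ i, x i ≠ y i)
    (hx : Tendsto x l (𝓝 X)) (hy : Tendsto y l (𝓝 X)) :
    Tendsto (fun i => slope (f i) (x i) (y i)) l (𝓝 (deriv f₀ X)) := by
  choose c hc hslope using fun i => exists_deriv_eq_slope_mem_uIcc (hf i) (hxy i)
  have hcX : Tendsto c l (𝓝 X) :=
    tendsto_of_tendsto_of_tendsto_of_le_of_le (by simpa using hx.min hy)
      (by simpa using hx.max hy) (fun i => (hc i).1) (fun i => (hc i).2)
  exact (hd.tendsto_comp hd₀ hcX).congr hslope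

theorem Function.Semiconj.of_tendstoLocallyUniformly {ι α β : Type*} [UniformSpace β]
    [T2Space β] {l : Filter ι} [l.NeBot] {f : ι → β → β} {f₀ : β → β} {q : ι → α → β}
    {Q : α → β} {π : α → α} (hf : TendstoLocallyUniformly f f₀ l) (hf₀ : Continuous f₀)
    (hq : ∀ a, Tendsto (fun i => q i a) l (𝓝 (Q a))) (hsc : ∀ᶠ i in l, Semiconj (q i) π (f i)) :
    Semiconj Q π f₀ := fun a =>
  tendsto_nhds_unique ((hq (π a)).congr' (hsc.mono fun _ h => h a))
    (hf.tendsto_comp hf₀.continuousAt (hq a))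

theorem Function.Semiconj.minimalPeriod_eq {α β : Type*} {f : α → β} {fa : α → α}
    {fb : β → β} (h : Semiconj f fa fb) (hf : Injective f) (x : α) :
    minimalPeriod fb (f x) = minimalPeriod fa x :=
  minimalPeriod_eq_minimalPeriod_iff.2 fun n => by
    simp only [IsPeriodicPt, IsFixedPt, ← h.iterate_right n x, hf.eq_iff]

theorem StrictMonoOn.eq_self_of_mapsTo {α : Type*} [LinearOrder α] {s : Set α} (hs : s.Finite)
    {f : α → α} (hf : StrictMonoOn f s) (hmaps : MapsTo f s s) {x : α} (hx : x ∈ s) :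
    f x = x := by
  have : Finite s := hs
  have hmono : StrictMono (hmaps.restrict f s s) := fun a b hab => hf a.2 b.2 hab
  exact congrArg Subtype.val (le_antisymm (hmono.apply_le (x := ⟨x, hx⟩)) hmono.le_apply)

theorem strictMonoOn_comp_self_of_pos_mul_sub {α : Type*} [LinearOrder α] {q : α → ℝ}
    (hq : StrictMono q) {f : α → α} {s : Set α} (hmaps : MapsTo f s s) {c : ℝ}
    (h : ∀ a ∈ s, ∀ b ∈ s, a < b → 0 < c * (q (f b) - q (f a))) : StrictMonoOn (f ∘ f) s := by
  rcases lt_trichotomy c 0 with hc | rfl | hc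
  · have hanti : StrictAntiOn f s := fun a ha b hb hab =>
      hq.lt_iff_lt.1 (sub_neg.1 (neg_of_mul_pos_right (h a ha b hb hab) hc.le))
    exact hanti.comp hanti hmaps
  · exact fun a ha b hb hab => absurd (h a ha b hb hab) (by simp)
  · have hmono : StrictMonoOn f s := fun a ha b hb hab =>
      hq.lt_iff_lt.1 (sub_pos.1 (pos_of_mul_pos_right (h a ha b hb hab) hc.le))
    exact hmono.comp hmono hmaps

section Orbits

variable {ι α : Type*} {l : Filter ι} {f : ι → ℝ → ℝ} {f₀ : ℝ → ℝ} {q : ι → α → ℝ}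
  {Q : α → ℝ} {π : α → α}

theorem tendsto_sub_div_sub_iterate (hf : ∀ i, Differentiable ℝ (f i))
    (hd : TendstoLocallyUniformly (fun i => deriv (f i)) (deriv f₀) l)
    (hd₀ : Continuous (deriv f₀)) (hq : ∀ i, Injective (q i)) (hπ : Injective π)
    (hlim : ∀ a, Tendsto (fun i => q i a) l (𝓝 (Q a)))
    (hsc : ∀ᶠ i in l, Semiconj (q i) π (f i)) (hQ : Semiconj Q π f₀) {a b : α} (hab : a ≠ b)
    (hQab : Q a = Q b) (n : ℕ) :
    Tendsto (fun i => (q i (π^[n] a) - q i (π^[n] b)) / (q i a - q i b)) l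
      (𝓝 (∏ t ∈ range n, deriv f₀ (f₀^[t] (Q a)))) := by
  induction n with
  | zero =>
    simp only [iterate_zero_apply, prod_range_zero]
    exact tendsto_const_nhds.congr fun i => (div_self (sub_ne_zero.2 ((hq i).ne hab))).symm
  | succ n ih =>
    have hne : π^[n] a ≠ π^[n] b := (hπ.iterate n).ne hab
    have hstep : Tendsto (fun i => slope (f i) (q i (π^[n] b)) (q i (π^[n] a))) l
        (𝓝 (deriv f₀ (f₀^[n] (Q a)))) := by
      refine tendsto_slope_of_tendstoLocallyUniformly_deriv hf hd hd₀.continuousAt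
        (fun i => (hq i).ne hne.symm) ?_ ?_
      · rw [hQab, ← hQ.iterate_right n b]
        exact hlim _
      · rw [← hQ.iterate_right n a]
        exact hlim _
    rw [prod_range_succ]
    refine (ih.mul hstep).congr' ?_
    filter_upwards [hsc] with i hi
    have hden : q i (π^[n] a) - q i (π^[n] b) ≠ 0 := sub_ne_zero.2 ((hq i).ne hne)
    rw [iterate_succ_apply', iterate_succ_apply', hi, hi, slope_def_field]
    field_simp

theorem iterate_two_mul_apply_eq_self [LinearOrder α] [Finite α] [l.NeBot]
    (hf : ∀ i, Differentiable ℝ (f i))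
    (hd : TendstoLocallyUniformly (fun i => deriv (f i)) (deriv f₀) l)
    (hd₀ : Continuous (deriv f₀)) (hq : ∀ i, StrictMono (q i)) (hπ : Injective π)
    (hlim : ∀ a, Tendsto (fun i => q i a) l (𝓝 (Q a)))
    (hsc : ∀ᶠ i in l, Semiconj (q i) π (f i)) (hQ : Semiconj Q π f₀) {p N : ℕ} (hpN : p ≤ N)
    (hN : π^[N] = id) (hp : ∀ a, Q (π^[p] a) = Q a) (a : α) : π^[2 * p] a = a := by
  rw [two_mul, iterate_add_apply]
  by_cases hfix : π^[p] a = a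
  · rw [hfix, hfix]
  have hratio := fun b c => tendsto_sub_div_sub_iterate hf hd hd₀ (fun i => (hq i).injective) hπ
    hlim hsc hQ (a := b) (b := c)
  set S := {b | Q b = Q a}
  have hmaps : MapsTo π^[p] S S := fun b hb => (hp b).trans hb
  set D := fun t => deriv f₀ (f₀^[t] (Q a))
  have hprod : ∏ t ∈ range N, D t = 1 := by
    refine tendsto_nhds_unique (hp a ▸ hratio _ _ hfix (hp a) N)
      (tendsto_const_nhds.congr fun i => ?_)
    rw [hN, id, id, div_self (sub_ne_zero.2 ((hq i).injective.ne hfix))]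
  have hD : ∏ t ∈ range p, D t ≠ 0 :=
    left_ne_zero_of_mul_eq_one ((prod_range_mul_prod_Ico D hpN).trans hprod)
  have hsign : ∀ᶠ i in l, ∀ b ∈ S, ∀ c ∈ S, b < c →
      0 < (∏ t ∈ range p, D t) * (q i (π^[p] c) - q i (π^[p] b)) := by
    refine eventually_all.2 fun b => eventually_imp_distrib_left.2 fun hb =>
      eventually_all.2 fun c => eventually_imp_distrib_left.2 fun hc =>
      eventually_imp_distrib_left.2 fun hbc => ?_
    have hc' : Q c = Q a := hc
    have := (tendsto_const_nhds.mul (hc' ▸ hratio _ _ hbc.ne' (hc'.trans hb.symm) p)).eventually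
      (lt_mem_nhds (mul_self_pos.2 hD))
    filter_upwards [this] with i hi
    have hden : 0 < q i c - q i b := sub_pos.2 (hq i hbc)
    simpa [mul_assoc, div_mul_cancel₀ _ hden.ne'] using mul_pos hi hden
  obtain ⟨i, hi⟩ := hsign.exists
  exact (strictMonoOn_comp_self_of_pos_mul_sub (hq i) hmaps hi).eq_self_of_mapsTo
    (toFinite S) (hmaps.comp hmaps) rfl

end Orbits

/-- Let `g k` be `C¹` maps converging to a `C¹` map `g` in the `C¹`
topology (uniformly with derivatives on every compact set).  Suppose each `g k`
has a periodic orbit `q k 0 < q k 1 < ⋯ < q k (m-1)` of minimal period `m`, and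
`q k i → Q i` as `k → ∞`, the limit points `Q i` being periodic points of `g` of
period `m`.  If the minimal period `k₀` of the limit orbit under `g` is smaller
than `m`, then `k₀ = m / 2`. -/
theorem stmt8 (g : ℕ → ℝ → ℝ) (glim : ℝ → ℝ)
    (hgk : ∀ k, ContDiff ℝ 1 (g k)) (hg : ContDiff ℝ 1 glim)
    (hconv : ∀ K : Set ℝ, IsCompact K →
      TendstoUniformlyOn (fun k => g k) glim Filter.atTop K)
    (hconv' : ∀ K : Set ℝ, IsCompact K →
      TendstoUniformlyOn (fun k => deriv (g k)) (deriv glim) Filter.atTop K)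
    (m : ℕ) (hm : 0 < m) (q : ℕ → Fin m → ℝ) (Q : Fin m → ℝ)
    (hmono : ∀ k, StrictMono (q k))
    (hper : ∀ k i, Function.minimalPeriod (g k) (q k i) = m)
    (hinv : ∀ k i, ∃ j, g k (q k i) = q k j)
    (hlim : ∀ i, Filter.Tendsto (fun k => q k i) Filter.atTop (nhds (Q i)))
    (hQper : ∀ i, glim^[m] (Q i) = Q i)
    (k₀ : ℕ) (hk₀ : ∀ i, Function.minimalPeriod glim (Q i) = k₀)
    (hlt : k₀ < m) :
    2 * k₀ = m := by
  choose P hP using hinv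
  obtain ⟨π, hfreq⟩ : ∃ π : Fin m → Fin m, ∃ᶠ k in atTop, Semiconj (q k) π (g k) :=
    frequently_exists.1 (.of_forall fun k => ⟨P k, fun i => (hP k i).symm⟩)
  set F := atTop ⊓ 𝓟 {k | Semiconj (q k) π (g k)}
  have : F.NeBot := frequently_iff_neBot.1 hfreq
  have hsc : ∀ᶠ k in F, Semiconj (q k) π (g k) := mem_inf_of_right (mem_principal_self _)
  have hlimF (i : Fin m) : Tendsto (fun k => q k i) F (𝓝 (Q i)) := (hlim i).mono_left inf_le_left
  obtain ⟨k, hk⟩ := hsc.exists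
  have hπper (i : Fin m) : minimalPeriod π i = m :=
    (hk.minimalPeriod_eq (hmono k).injective i).symm.trans (hper k i)
  have hπm : π^[m] = id := funext fun i => by
    simpa [hπper i] using iterate_minimalPeriod (f := π) (x := i)
  have hπ : Injective π := injective_iff_periodicPts_eq_univ.2 <| Set.eq_univ_of_forall fun i =>
    minimalPeriod_pos_iff_mem_periodicPts.1 (by rw [hπper i]; exact hm)
  have hQ : Semiconj Q π glim := .of_tendstoLocallyUniformly
    ((tendstoLocallyUniformly_iff_forall_isCompact.2 hconv).mono_left inf_le_left)
    hg.continuous hlimF hsc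
  let i₀ : Fin m := ⟨0, hm⟩
  have h2k₀ : IsPeriodicPt π (2 * k₀) i₀ := iterate_two_mul_apply_eq_self
    (fun k => (hgk k).differentiable one_ne_zero)
    ((tendstoLocallyUniformly_iff_forall_isCompact.2 hconv').mono_left inf_le_left)
    (hg.continuous_deriv le_rfl) hmono hπ hlimF hsc hQ hlt.le hπm
    (fun i => by rw [hQ.iterate_right k₀ i, ← hk₀ i, iterate_minimalPeriod]) i₀
  have hk₀pos : 0 < k₀ := hk₀ i₀ ▸ IsPeriodicPt.minimalPeriod_pos hm (hQper i₀)
  obtain ⟨c, hc⟩ := hπper i₀ ▸ h2k₀.minimalPeriod_dvd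
  have hc2 : c < 2 := Nat.lt_of_mul_lt_mul_left (a := m) (by omega)
  interval_cases c <;> omega
end

section
/- Let {f_t}_{t∈[0,1]} be a continuous full family of C¹ unimodal maps and let V be a periodic point component of G_n^{−1}(0) whose period is n. If k = min{ per(x) : (t,x) ∈ V } is smaller than n, then k = n/2. -/
/-!
Every point of `V` is `n`-periodic. Given `m`, near a point `(t₀, x₀)` with `f_{t₀}^s x₀ = x₀`,
every `m`-periodic point of `f_t^s` is fixed by `f_t^{2s}`: if the multiplier `(f_{t₀}^s)' x₀`
vanishes, `f_t^s` is a contraction near `x₀`, and otherwise `f_t^{2s}` is increasing near `x₀`;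
neither a contraction nor an increasing map has periodic orbits other than fixed points. The set
of `f^s`-fixed points being closed, connectedness of `V` then turns a point of `V` fixed by `f^s`
and one not fixed by it into a point of `V` fixed by `f^{2s}` but not by `f^s`.

With `s = k`, minimality of `k` gives a point of period exactly `2k`, so `n = 2ka`. At the point
of period `k`, `G_n = 0` says `((f^k)')^a = -1`, so `a` is odd. If `a > 1`, the same argument with
`s = 2k` gives a point whose period divides `4k` and `2ka`, hence `2k`, and yet does not divide
`2k`.
-/

open Function Set Metric Filter Topology
open scoped NNReal

theorem Nat.eq_two_mul_of_dvd_two_mul {j k : ℕ} (h₁ : j ∣ 2 * k) (h₂ : ¬ j ∣ k) (h₃ : k ≤ j) :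
    j = 2 * k := by
  obtain ⟨a, ha⟩ := h₁
  rcases a with _ | _ | a
  · simp_all
  · omega
  · exact absurd (show j = k by nlinarith) (fun h => h₂ (h ▸ dvd_rfl))

theorem Nat.dvd_of_dvd_two_mul_of_dvd_mul_of_odd {j m a : ℕ} (h₁ : j ∣ m * 2) (h₂ : j ∣ m * a)
    (ha : Odd a) : j ∣ m := by
  simpa [Nat.gcd_mul_left, Nat.coprime_two_left.2 ha] using Nat.dvd_gcd h₁ h₂

section Orbits

variable {α : Type*} {g : α → α} {S : Set α} {m : ℕ} {x : α}

theorem isFixedPt_of_isPeriodicPt_of_lipschitzOnWith [MetricSpace α] {K : ℝ≥0}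
    (hg : LipschitzOnWith K g S) (hK : K < 1) (hm : 0 < m) (horb : ∀ i ≤ m, g^[i] x ∈ S)
    (hx : IsPeriodicPt g m x) : IsFixedPt g x := by
  have hdist : ∀ i ≤ m, dist (g^[i + 1] x) (g^[i] x) ≤ K ^ i * dist (g x) x := by
    intro i hi
    induction i with
    | zero => simp
    | succ i ih =>
      calc dist (g^[i + 1 + 1] x) (g^[i + 1] x)
          = dist (g (g^[i + 1] x)) (g (g^[i] x)) := by
            rw [iterate_succ_apply' g (i + 1), iterate_succ_apply' g i]
        _ ≤ K * dist (g^[i + 1] x) (g^[i] x) :=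
            hg.dist_le_mul _ (horb _ hi) _ (horb i (by omega))
        _ ≤ K * (K ^ i * dist (g x) x) := by gcongr; exact ih (by omega)
        _ = K ^ (i + 1) * dist (g x) x := by ring
  have hle := hdist m le_rfl
  rw [iterate_succ_apply', hx.eq] at hle
  have hKm : (K : ℝ) ^ m < 1 := pow_lt_one₀ K.2 hK hm.ne'
  exact dist_le_zero.1 (by nlinarith [dist_nonneg (x := g x) (y := x)])

theorem iterate_lt_of_strictMonoOn [Preorder α] (hg : StrictMonoOn g S) (hx : g x < x)
    (horb : ∀ i ≤ m, g^[i] x ∈ S) : ∀ i, 0 < i → i ≤ m → g^[i] x < x := by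
  intro i hi him
  induction i with
  | zero => omega
  | succ i ih =>
    rcases i.eq_zero_or_pos with rfl | hi
    · simpa using hx
    · rw [iterate_succ_apply']
      exact (hg (horb i (by omega)) (horb 0 (by omega)) (ih hi (by omega))).trans hx

theorem isFixedPt_of_isPeriodicPt_of_strictMonoOn [LinearOrder α] (hg : StrictMonoOn g S)
    (hm : 0 < m) (horb : ∀ i ≤ m, g^[i] x ∈ S) (hx : IsPeriodicPt g m x) : IsFixedPt g x := by
  rcases lt_trichotomy (g x) x with h | h | h
  · exact absurd hx.eq (iterate_lt_of_strictMonoOn hg h horb m hm le_rfl).ne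
  · exact h
  · exact absurd hx.eq
      (iterate_lt_of_strictMonoOn (α := αᵒᵈ) (fun a ha b hb hab => hg hb ha hab) h horb m hm
        le_rfl).ne

end Orbits

theorem IsPreconnected.exists_mem_diff_of_eventually {α : Type*} [TopologicalSpace α]
    {V C : Set α} (hV : IsPreconnected V) (hC : IsClosed C) (hVC : (V ∩ C).Nonempty)
    (hVC' : (V \ C).Nonempty) {Q : α → Prop} (hQ : ∀ p ∈ V ∩ C, ∀ᶠ q in 𝓝 p, q ∈ V → Q q) :
    ∃ q ∈ V \ C, Q q := by
  by_contra! hnQ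
  -- `W` is open, contains `V ∩ C` and meets `V` only in `C`: `V ∩ C` is clopen in `V`.
  set W := {p | ∀ᶠ q in 𝓝 p, q ∈ V → q ∈ C}
  have hCW : V ∩ C ⊆ W := fun p hp =>
    (hQ p hp).mono fun q hq hqV => by_contra fun hqC => hnQ q ⟨hqV, hqC⟩ (hq hqV)
  have hcover : V ⊆ W ∪ Cᶜ := fun p hp =>
    (em (p ∈ C)).imp (fun hpC => hCW ⟨hp, hpC⟩) id
  obtain ⟨p, hpV, hpW, hpC⟩ := hV W Cᶜ isOpen_setOfPred_eventually_nhds hC.isOpen_compl hcover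
    (hVC.mono fun p hp => ⟨hp.1, hCW hp⟩) hVC'
  exact hpC (hpW.self_of_nhds hpV)

section LocalFamily

variable {P : Type*} [TopologicalSpace P] {T : Set P} {g : P → ℝ → ℝ} {t₀ : P} {x₀ : ℝ}

theorem ContinuousWithinAt.exists_ball_eventually_mem {φ : P × ℝ → ℝ}
    (hφ : ContinuousWithinAt φ (T ×ˢ univ) (t₀, x₀)) {A : Set ℝ} (hA : A ∈ 𝓝 (φ (t₀, x₀))) :
    ∃ r > 0, ∀ᶠ p in 𝓝[T ×ˢ univ] (t₀, x₀), p.1 ∈ T ∧ ∀ y ∈ ball x₀ r, φ (p.1, y) ∈ A := by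
  have h := hφ.eventually_mem hA
  rw [nhdsWithin_prod_eq, nhdsWithin_univ] at h ⊢
  obtain ⟨pa, hpa, pb, hpb, hφA⟩ := eventually_prod_iff.1 h
  obtain ⟨r, hr, hball⟩ := Metric.eventually_nhds_iff_ball.1 hpb
  exact ⟨r, hr, ((eventually_mem_nhdsWithin.and hpa).prod_inl _).mono
    fun p hp => ⟨hp.1, fun y hy => hφA hp.2 (hball y hy)⟩⟩

theorem eventually_forall_iterate_mem_ball
    (hcont : ∀ i, ContinuousWithinAt (fun p : P × ℝ => (g p.1)^[i] p.2) (T ×ˢ univ) (t₀, x₀))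
    (hfix : IsFixedPt (g t₀) x₀) {r : ℝ} (hr : 0 < r) (m : ℕ) :
    ∀ᶠ p in 𝓝[T ×ˢ univ] (t₀, x₀), ∀ i ≤ m, (g p.1)^[i] p.2 ∈ ball x₀ r := by
  simp only [← mem_Iic]
  refine (finite_Iic m).eventually_all.2 fun i _ => (hcont i).eventually_mem ?_
  show ball x₀ r ∈ 𝓝 ((g t₀)^[i] x₀)
  rw [(hfix.iterate i).eq]
  exact ball_mem_nhds x₀ hr

theorem eventually_isFixedPt_of_nnnorm_deriv_lt_one
    (hdiff : ∀ t ∈ T, Differentiable ℝ (g t))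
    (hcont : ∀ i, ContinuousWithinAt (fun p : P × ℝ => (g p.1)^[i] p.2) (T ×ˢ univ) (t₀, x₀))
    (hderiv : ContinuousWithinAt (fun p : P × ℝ => deriv (g p.1) p.2) (T ×ˢ univ) (t₀, x₀))
    (hfix : IsFixedPt (g t₀) x₀) (hν : ‖deriv (g t₀) x₀‖₊ < 1) {m : ℕ} (hm : 0 < m) :
    ∀ᶠ p in 𝓝[T ×ˢ univ] (t₀, x₀), IsPeriodicPt (g p.1) m p.2 → IsFixedPt (g p.1) p.2 := by
  obtain ⟨K, hνK, hK⟩ := exists_between hν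
  obtain ⟨r, hr, hsmall⟩ := hderiv.exists_ball_eventually_mem
    ((isOpen_lt continuous_nnnorm continuous_const).mem_nhds hνK)
  filter_upwards [hsmall, eventually_forall_iterate_mem_ball hcont hfix hr m]
    with p ⟨hpT, hpK⟩ horb hper
  have hlip : LipschitzOnWith K (g p.1) (ball x₀ r) :=
    (convex_ball x₀ r).lipschitzOnWith_of_nnnorm_deriv_le
      (fun y _ => (hdiff p.1 hpT).differentiableAt) fun y hy => (hpK y hy).le
  exact isFixedPt_of_isPeriodicPt_of_lipschitzOnWith hlip hK hm horb hper

theorem eventually_isPeriodicPt_two_of_deriv_ne_zero (ht₀ : t₀ ∈ T)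
    (hdiff : ∀ t ∈ T, Differentiable ℝ (g t))
    (hcont : ∀ i, ContinuousWithinAt (fun p : P × ℝ => (g p.1)^[i] p.2) (T ×ˢ univ) (t₀, x₀))
    (hderiv : ContinuousWithinAt (fun p : P × ℝ => deriv ((g p.1)^[2]) p.2) (T ×ˢ univ)
      (t₀, x₀))
    (hfix : IsFixedPt (g t₀) x₀) (hν : deriv (g t₀) x₀ ≠ 0) {m : ℕ} (hm : 0 < m) :
    ∀ᶠ p in 𝓝[T ×ˢ univ] (t₀, x₀), IsPeriodicPt (g p.1) m p.2 → IsPeriodicPt (g p.1) 2 p.2 := by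
  have hpos : 0 < deriv ((g t₀)^[2]) x₀ := by
    rw [((hdiff t₀ ht₀ x₀).hasDerivAt.iterate x₀ hfix 2).deriv]
    positivity
  obtain ⟨r, hr, hincr⟩ := hderiv.exists_ball_eventually_mem (Ioi_mem_nhds hpos)
  filter_upwards [hincr, eventually_forall_iterate_mem_ball hcont hfix hr (2 * m)]
    with p ⟨hpT, hp⟩ horb hper
  have hmono : StrictMonoOn (g p.1)^[2] (ball x₀ r) :=
    strictMonoOn_of_deriv_pos (convex_ball x₀ r)
      ((hdiff p.1 hpT).iterate 2).continuous.continuousOn fun y hy => hp y (interior_subset hy)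
  refine isFixedPt_of_isPeriodicPt_of_strictMonoOn hmono hm (fun i hi => ?_) (hper.iterate 2)
  rw [← iterate_mul]
  exact horb _ (by omega)

theorem eventually_isPeriodicPt_two_of_isPeriodicPt (ht₀ : t₀ ∈ T)
    (hdiff : ∀ t ∈ T, Differentiable ℝ (g t))
    (hcont : ∀ i, ContinuousWithinAt (fun p : P × ℝ => (g p.1)^[i] p.2) (T ×ˢ univ) (t₀, x₀))
    (hderiv : ∀ i, ContinuousWithinAt (fun p : P × ℝ => deriv ((g p.1)^[i]) p.2) (T ×ˢ univ)
      (t₀, x₀))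
    (hfix : IsFixedPt (g t₀) x₀) {m : ℕ} (hm : 0 < m) :
    ∀ᶠ p in 𝓝[T ×ˢ univ] (t₀, x₀), IsPeriodicPt (g p.1) m p.2 → IsPeriodicPt (g p.1) 2 p.2 := by
  by_cases hν : deriv (g t₀) x₀ = 0
  · exact (eventually_isFixedPt_of_nnnorm_deriv_lt_one hdiff hcont (by simpa using hderiv 1)
      hfix (by simp [hν]) hm).mono fun p hp hper => (hp hper).isPeriodicPt 2
  · exact eventually_isPeriodicPt_two_of_deriv_ne_zero ht₀ hdiff hcont (hderiv 2) hfix hν hm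

end LocalFamily

section Family

variable {f : ℝ → ℝ → ℝ}

theorem continuousOn_iterate_family
    (hC : ContinuousOn (fun p : ℝ × ℝ => f p.1 p.2) (Icc (0 : ℝ) 1 ×ˢ univ)) (s : ℕ) :
    ContinuousOn (fun p : ℝ × ℝ => (f p.1)^[s] p.2) (Icc (0 : ℝ) 1 ×ˢ univ) := by
  induction s with
  | zero => exact continuousOn_snd
  | succ s ih =>
    simp only [iterate_succ_apply']
    exact hC.comp (continuousOn_fst.prodMk ih) fun p hp => ⟨hp.1, mem_univ _⟩

theorem continuousOn_deriv_iterate_family (hdiff : ∀ t ∈ Icc (0 : ℝ) 1, Differentiable ℝ (f t))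
    (hC : ContinuousOn (fun p : ℝ × ℝ => f p.1 p.2) (Icc (0 : ℝ) 1 ×ˢ univ))
    (hD : ContinuousOn (fun p : ℝ × ℝ => deriv (f p.1) p.2) (Icc (0 : ℝ) 1 ×ˢ univ)) (s : ℕ) :
    ContinuousOn (fun p : ℝ × ℝ => deriv ((f p.1)^[s]) p.2) (Icc (0 : ℝ) 1 ×ˢ univ) := by
  induction s with
  | zero => simpa using continuousOn_const
  | succ s ih =>
    refine ContinuousOn.congr ?_ fun p hp => (iterate_succ' (f p.1) s ▸
      deriv_comp p.2 (hdiff p.1 hp.1 _) ((hdiff p.1 hp.1).iterate s _))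
    exact (hD.comp (continuousOn_fst.prodMk (continuousOn_iterate_family hC s))
      fun p hp => ⟨hp.1, mem_univ _⟩).mul ih

theorem IsPreconnected.exists_isPeriodicPt_two_mul_not_isPeriodicPt
    (hdiff : ∀ t ∈ Icc (0 : ℝ) 1, Differentiable ℝ (f t))
    (hC : ContinuousOn (fun p : ℝ × ℝ => f p.1 p.2) (Icc (0 : ℝ) 1 ×ˢ univ))
    (hD : ContinuousOn (fun p : ℝ × ℝ => deriv (f p.1) p.2) (Icc (0 : ℝ) 1 ×ˢ univ))
    {V : Set (ℝ × ℝ)} (hV : IsPreconnected V) (hVS : V ⊆ Icc (0 : ℝ) 1 ×ˢ univ) {n : ℕ}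
    (hn : 0 < n) (hVn : ∀ p ∈ V, IsPeriodicPt (f p.1) n p.2) {s : ℕ} (hs : 0 < s) (hsn : s ∣ n)
    (hper : ∃ p ∈ V, IsPeriodicPt (f p.1) s p.2) (hnper : ∃ p ∈ V, ¬ IsPeriodicPt (f p.1) s p.2) :
    ∃ p ∈ V, IsPeriodicPt (f p.1) (2 * s) p.2 ∧ ¬ IsPeriodicPt (f p.1) s p.2 := by
  set C := Icc (0 : ℝ) 1 ×ˢ univ ∩ (fun p : ℝ × ℝ => (f p.1)^[s] p.2 - p.2) ⁻¹' {0}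
  have hCS : IsClosed C :=
    ((continuousOn_iterate_family hC s).sub continuousOn_snd).preimage_isClosed_of_isClosed
      (isClosed_Icc.prod isClosed_univ) isClosed_singleton
  have hmem : ∀ p ∈ V, p ∈ C ↔ IsPeriodicPt (f p.1) s p.2 := fun p hp => by
    simp [C, hVS hp, sub_eq_zero, IsPeriodicPt, IsFixedPt]
  have hiter : ∀ t x m, IsPeriodicPt ((f t)^[s]) m x ↔ IsPeriodicPt (f t) (s * m) x :=
    fun t x m => by rw [IsPeriodicPt, IsPeriodicPt, iterate_mul]
  obtain ⟨q, ⟨hqV, hqC⟩, hq⟩ := hV.exists_mem_diff_of_eventually hCS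
    (let ⟨p, hpV, hp⟩ := hper; ⟨p, hpV, (hmem p hpV).2 hp⟩)
    (let ⟨p, hpV, hp⟩ := hnper; ⟨p, hpV, fun h => hp ((hmem p hpV).1 h)⟩)
    (Q := fun q => IsPeriodicPt (f q.1) (2 * s) q.2) fun p ⟨hpV, hpC⟩ => by
      have hloc := eventually_isPeriodicPt_two_of_isPeriodicPt (g := fun t => (f t)^[s])
        (hVS hpV).1 (fun t ht => (hdiff t ht).iterate s)
        (fun i => by
          simp only [← iterate_mul]
          exact continuousOn_iterate_family hC (s * i) p (hVS hpV))
        (fun i => by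
          simp only [← iterate_mul]
          exact continuousOn_deriv_iterate_family hdiff hC hD (s * i) p (hVS hpV))
        ((hmem p hpV).1 hpC) (Nat.div_pos (Nat.le_of_dvd hn hsn) hs)
      filter_upwards [eventually_nhdsWithin_iff.1 hloc] with q hq hqV
      rw [mul_comm, ← hiter]
      exact hq (hVS hqV) ((hiter _ _ _).2 (by rw [Nat.mul_div_cancel' hsn]; exact hVn q hqV))
  exact ⟨q, hqV, hq, fun h => hqC ((hmem q hqV).2 h)⟩

end Family

section Gmap

variable {f : ℝ → ℝ → ℝ}

theorem isPeriodicPt_of_mem_Zset {n : ℕ} {p : ℝ × ℝ} (hp : p ∈ Zset f n) :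
    IsPeriodicPt (f p.1) n p.2 := by
  obtain ⟨-, hG⟩ := hp
  unfold Gmap at hG
  split_ifs at hG with hodd hhalf
  · exact sub_eq_zero.1 hG
  · obtain ⟨c, rfl⟩ := Nat.not_odd_iff_even.1 hodd
    rw [← two_mul, Nat.mul_div_cancel_left c two_pos] at hhalf
    exact (show IsPeriodicPt (f p.1) c p.2 from hhalf).add hhalf
  · exact sub_eq_zero.1 ((div_eq_zero_iff.1 hG).resolve_right (sub_ne_zero.2 hhalf))

theorem odd_of_Gmap_eq_zero {t x : ℝ} {j a : ℕ} (hdiff : Differentiable ℝ (f t))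
    (hx : IsPeriodicPt (f t) j x) (hG : Gmap f (2 * (j * a)) t x = 0) : Odd a := by
  have hfix : (f t)^[j * a] x = x := hx.mul_const a
  rw [Gmap, if_neg (by simp [Nat.not_odd_iff_even]), Nat.mul_div_cancel_left _ two_pos,
    if_pos hfix, iterate_mul,
    (((hdiff.iterate j) x).hasDerivAt.iterate x hx a).deriv] at hG
  rcases Nat.even_or_odd a with ha | ha
  · nlinarith [ha.pow_nonneg (deriv (f t)^[j] x)]
  · exact ha

end Gmap

theorem stmt9_general (f : ℝ → ℝ → ℝ) (hf : ContFullFamily f) (n : ℕ)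
    (V : Set (ℝ × ℝ)) (hV : IsPPComponent f n V) (hVper : CompPeriod f V n)
    (k : ℕ)
    (hk : IsLeast {j : ℕ | ∃ p ∈ V, Function.minimalPeriod (f p.1) p.2 = j} k)
    (hkn : k < n) :
    2 * k = n := by
  obtain ⟨hunimodal, hC, hD, -, -, -⟩ := hf
  have hdiff : ∀ t ∈ Icc (0 : ℝ) 1, Differentiable ℝ (f t) := fun t ht =>
    (hunimodal t ht).1.differentiable one_ne_zero
  obtain ⟨p₀, -, rfl⟩ := hV
  have hVZ := connectedComponentIn_subset (Zset f n) p₀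
  have hVn : ∀ p ∈ connectedComponentIn (Zset f n) p₀, IsPeriodicPt (f p.1) n p.2 :=
    fun p hp => isPeriodicPt_of_mem_Zset (hVZ hp)
  have hstep := fun s =>
    isPreconnected_connectedComponentIn.exists_isPeriodicPt_two_mul_not_isPeriodicPt hdiff hC hD
      (fun p hp => ⟨(hVZ hp).1, mem_univ _⟩) (by omega) hVn (s := s)
  simp only [isPeriodicPt_iff_minimalPeriod_dvd] at hVn hstep
  obtain ⟨q, hqV, hqk⟩ := hk.1
  obtain ⟨p, hpV, hpn⟩ := hVper.2
  have hkn' : k ∣ n := hqk ▸ hVn q hqV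
  have hk0 : 0 < k := Nat.pos_of_dvd_of_pos hkn' (by omega)
  obtain ⟨p₁, hp₁V, hp₁⟩ := hstep k hk0 hkn' ⟨q, hqV, dvd_of_eq hqk⟩
    ⟨p, hpV, fun h => hkn.not_ge (hpn ▸ Nat.le_of_dvd hk0 h)⟩
  have h₁ : minimalPeriod (f p₁.1) p₁.2 = 2 * k :=
    Nat.eq_two_mul_of_dvd_two_mul hp₁.1 hp₁.2 (hk.2 ⟨p₁, hp₁V, rfl⟩)
  obtain ⟨a, rfl⟩ : 2 * k ∣ n := h₁ ▸ hVn p₁ hp₁V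
  have ha : Odd a := odd_of_Gmap_eq_zero (hdiff _ (hVZ hqV).1)
    (isPeriodicPt_iff_minimalPeriod_dvd.2 (dvd_of_eq hqk)) (by rw [← mul_assoc]; exact (hVZ hqV).2)
  by_contra hne
  obtain ⟨p₂, hp₂V, hp₂⟩ := hstep (2 * k) (by omega) (dvd_mul_right _ _) ⟨p₁, hp₁V, dvd_of_eq h₁⟩
    ⟨p, hpV, fun h => hne (Nat.dvd_antisymm (dvd_mul_right _ _) (hpn ▸ h))⟩
  exact hp₂.2 (Nat.dvd_of_dvd_two_mul_of_dvd_mul_of_odd (mul_comm 2 (2 * k) ▸ hp₂.1)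
    (hVn p₂ hp₂V) ha)

/-- Let `V` be a periodic point component of `G_n⁻¹(0)` of period `n`.
If `k = min { per x | (t,x) ∈ V }` is smaller than `n`, then `k = n/2`. -/
theorem stmt9 (f : ℝ → ℝ → ℝ) (hf : ContFullFamily f) (n : ℕ) (hn : 0 < n)
    (V : Set (ℝ × ℝ)) (hV : IsPPComponent f n V) (hVper : CompPeriod f V n)
    (k : ℕ)
    (hk : IsLeast {j : ℕ | ∃ p ∈ V, Function.minimalPeriod (f p.1) p.2 = j} k)
    (hkn : k < n) :
    2 * k = n :=
  stmt9_general f hf n V hV hVper k hk hkn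
end
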